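/- arXiv:1501.06235 — 12 statements merged into one kernel-verified Lean document; each statement's English description precedes it below -/
import Mathlib

section
/- If n = h + d with h > 0 and d > 0 integers, then (h/n)^n > exp(-d - d^2/h). -/
open Real

/-- From `log x < x - 1` at `x = (h + d) / h`: `log ((h + d) / h) < d / h`, and multiplying by
`h + d` gives the exponent `d + d ^ 2 / h`. -/
theorem Real.exp_neg_sub_sq_div_lt_rpow {h d : ℝ} (hh : 0 < h) (hd : 0 < d) :
    exp (-d - d ^ 2 / h) < (h / (h + d)) ^ (h + d) := by
  have hn : 0 < h + d := by linarith
  have hlog : log ((h + d) / h) < d / h := by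
    have := log_lt_sub_one_of_pos (div_pos hn hh)
      (by rw [ne_eq, div_eq_one_iff_eq hh.ne']; linarith)
    rwa [show (h + d) / h - 1 = d / h by field_simp; ring] at this
  have hexponent : -d - d ^ 2 / h = -((h + d) * (d / h)) := by field_simp; ring
  rw [rpow_def_of_pos (div_pos hh hn), exp_lt_exp, hexponent, ← inv_div (h + d) h, log_inv,
    neg_mul, neg_lt_neg_iff, mul_comm]
  exact mul_lt_mul_of_pos_left hlog hn

theorem stmt_0 (h d n : ℕ) (hh : 0 < h) (hd : 0 < d) (hn : n = h + d) :
    ((h : ℝ) / n) ^ n > Real.exp (-(d : ℝ) - (d : ℝ) ^ 2 / h) := by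
  have key := Real.exp_neg_sub_sq_div_lt_rpow (Nat.cast_pos.mpr hh) (Nat.cast_pos.mpr hd)
  rwa [← Nat.cast_add, ← hn, rpow_natCast] at key
end

section
/- If M = I - E is a real d×d matrix with |e_ij| ≤ ε for all 1 ≤ i,j ≤ d, and d·ε ≤ 1, then det(M) ≥ 1 - d·ε. -/
/-! Induction on `d`, eliminating the first row and column. The pivot of `1 - E` is at least
`1 - ε`, and its Schur complement is again of the form `1 - E'` with
`|E'ᵢⱼ| ≤ ε + ε² / (1 - ε) = ε / (1 - ε)`. The hypothesis survives, since
`(d - 1) · ε / (1 - ε) ≤ 1 ↔ d · ε ≤ 1`, and `(1 - ε) · (1 - (d - 1) · ε / (1 - ε)) = 1 - d · ε`. -/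

namespace Matrix

variable {K : Type*} [Field K] {n : ℕ}

def schurComplementZero (M : Matrix (Fin (n + 1)) (Fin (n + 1)) K) : Matrix (Fin n) (Fin n) K :=
  of fun i j => M i.succ j.succ - M i.succ 0 * M 0 j.succ / M 0 0

theorem det_eq_mul_det_schurComplementZero (M : Matrix (Fin (n + 1)) (Fin (n + 1)) K)
    (hM : M 0 0 ≠ 0) : M.det = M 0 0 * (schurComplementZero M).det := by
  -- subtracting multiples of row `0` clears column `0` below the pivot
  set c : Fin (n + 1) → K := Fin.cases 0 fun i => M i.succ 0 / M 0 0
  set B : Matrix (Fin (n + 1)) (Fin (n + 1)) K := of fun i j => M i j - c i * M 0 j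
  have hB0 : ∀ j, B 0 j = M 0 j := by simp [B, c]
  have hM_eq : M.det = B.det :=
    det_eq_of_forall_row_eq_smul_add_const c 0 rfl fun i j => by simp only [hB0]; simp [B]
  rw [hM_eq, det_succ_column_zero, Fin.sum_univ_succ, Finset.sum_eq_zero, add_zero]
  · simp only [Fin.val_zero, pow_zero, one_mul, hB0, Fin.succAbove_zero]
    congr 2
    ext i j
    simp [B, c, schurComplementZero, mul_div_right_comm]
  · intro i _
    simp [B, c, hM]

theorem one_sub_schurComplementZero_one_sub_apply (E : Matrix (Fin (n + 1)) (Fin (n + 1)) K)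
    (i j : Fin n) :
    (1 - schurComplementZero (1 - E) : Matrix (Fin n) (Fin n) K) i j =
      E i.succ j.succ + E i.succ 0 * E 0 j.succ / (1 - E 0 0) := by
  simp [schurComplementZero, one_apply, Fin.succ_ne_zero, (Fin.succ_ne_zero _).symm]
  ring

theorem abs_one_sub_schurComplementZero_one_sub_le {E : Matrix (Fin (n + 1)) (Fin (n + 1)) ℝ}
    {ε : ℝ} (hE : ∀ i j, |E i j| ≤ ε) (hε : ε < 1) (i j : Fin n) :
    |(1 - schurComplementZero (1 - E) : Matrix (Fin n) (Fin n) ℝ) i j| ≤ ε / (1 - ε) := by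
  have hε0 : 0 ≤ ε := (abs_nonneg _).trans (hE 0 0)
  have h1ε : 0 < 1 - ε := by linarith
  have hpivot : 1 - ε ≤ |1 - E 0 0| :=
    (by linarith [(abs_le.1 (hE 0 0)).2] : 1 - ε ≤ 1 - E 0 0).trans (le_abs_self _)
  rw [one_sub_schurComplementZero_one_sub_apply]
  calc _ ≤ |E i.succ j.succ| + |E i.succ 0| * |E 0 j.succ| / |1 - E 0 0| := by
        rw [← abs_mul, ← abs_div]; exact abs_add_le _ _
    _ ≤ ε + ε * ε / (1 - ε) := by
        gcongr
        exacts [hE _ _, hE _ _, hE _ _]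
    _ = ε / (1 - ε) := by field_simp; ring

theorem one_sub_mul_le_det_one_sub {n : ℕ} {ε : ℝ} (E : Matrix (Fin n) (Fin n) ℝ)
    (hE : ∀ i j, |E i j| ≤ ε) (hnε : n * ε ≤ 1) : 1 - n * ε ≤ (1 - E).det := by
  induction n generalizing ε with
  | zero => simp
  | succ n ih =>
    have hpivot : 1 - ε ≤ (1 - E) 0 0 := by
      simp only [sub_apply, one_apply_eq]; linarith [(abs_le.1 (hE 0 0)).2]
    -- for `1 × 1` matrices `ε = 1` is allowed, and then the pivot may vanish
    rcases n.eq_zero_or_pos with rfl | hn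
    · simpa [det_unique] using hpivot
    have hε1 : ε < 1 := by
      push_cast at hnε
      nlinarith [(Nat.one_le_cast (α := ℝ)).2 hn]
    have h1ε : 0 < 1 - ε := by linarith
    have hnε' : n * (ε / (1 - ε)) ≤ 1 := by
      rw [mul_div_assoc', div_le_one h1ε]; push_cast at hnε; linarith
    have hS : 1 - n * (ε / (1 - ε)) ≤ (schurComplementZero (1 - E)).det := by
      simpa using ih _ (abs_one_sub_schurComplementZero_one_sub_le hE hε1) hnε'
    calc 1 - ((n + 1 : ℕ) : ℝ) * ε = (1 - ε) * (1 - n * (ε / (1 - ε))) := by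
          push_cast; field_simp; ring
      _ ≤ (1 - E) 0 0 * (schurComplementZero (1 - E)).det := by
          gcongr
          linarith
      _ = (1 - E).det := (det_eq_mul_det_schurComplementZero _ (by linarith)).symm

end Matrix

theorem stmt_1_general (d : ℕ) (ε : ℝ)
    (E : Matrix (Fin d) (Fin d) ℝ) (hE : ∀ i j, |E i j| ≤ ε)
    (hdε : (d : ℝ) * ε ≤ 1) :
    ((1 : Matrix (Fin d) (Fin d) ℝ) - E).det ≥ 1 - (d : ℝ) * ε :=
  Matrix.one_sub_mul_le_det_one_sub E hE hdε

theorem stmt_1 (d : ℕ) (hd : 0 < d) (ε : ℝ) (hε : 0 ≤ ε)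
    (E : Matrix (Fin d) (Fin d) ℝ) (hE : ∀ i j, |E i j| ≤ ε)
    (hdε : (d : ℝ) * ε ≤ 1) :
    ((1 : Matrix (Fin d) (Fin d) ℝ) - E).det ≥ 1 - (d : ℝ) * ε :=
  stmt_1_general d ε E hE hdε
end

section
/- For every positive integer m, the central binomial coefficient satisfies binom(2m, m) < 4^m / sqrt(π·m). -/
theorem stmt_2 (m : ℕ) (hm : 0 < m) :
    (Nat.choose (2 * m) m : ℝ) < 4 ^ m / Real.sqrt (Real.pi * m) := by
  have hmR : (0:ℝ) < m := by exact_mod_cast hm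
  set C : ℝ := (Nat.choose (2 * m) m : ℝ) with hCdef
  have hCpos : 0 < C := by
    rw [hCdef]
    exact_mod_cast Nat.choose_pos (show m ≤ 2 * m by omega)
  -- (2m)! = C * (m!)^2
  have hfact : ((2 * m).factorial : ℝ) = C * (m.factorial : ℝ) ^ 2 := by
    have h := Nat.choose_mul_factorial_mul_factorial (show m ≤ 2 * m by omega)
    have h2 : 2 * m - m = m := by omega
    rw [h2] at h
    have h' : C * (m.factorial : ℝ) * m.factorial = ((2 * m).factorial : ℝ) := by
      rw [hCdef]
      exact_mod_cast h
    rw [← h']; ring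
  have hWfact := Real.Wallis.W_eq_factorial_ratio m
  have hW : Real.Wallis.W m * (2 * m + 1) = 16 ^ m / C ^ 2 := by
    rw [hWfact, hfact]
    have hf : (0:ℝ) < (m.factorial : ℝ) := by exact_mod_cast m.factorial_pos
    have h2m1 : (0:ℝ) < 2 * (m:ℝ) + 1 := by positivity
    field_simp
    ring_nf
    rw [show (16:ℝ) = 2^4 by norm_num, ← pow_mul]
    ring
  -- π * m < W m * (2m+1)
  have hle := Real.Wallis.le_W m
  have hkey : Real.pi * m < Real.Wallis.W m * (2 * m + 1) := by
    have h1 : Real.pi * m < ((2 * (m:ℝ) + 1) / (2 * m + 2) * (Real.pi / 2)) * (2 * m + 1) := by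
      rw [div_mul_eq_mul_div, div_mul_eq_mul_div, lt_div_iff₀ (by positivity)]
      nlinarith [Real.pi_pos]
    calc Real.pi * m < _ := h1
      _ ≤ _ := by
        apply mul_le_mul_of_nonneg_right hle (by positivity)
  have hsq : C ^ 2 < (4 ^ m / Real.sqrt (Real.pi * m)) ^ 2 := by
    have hs : Real.sqrt (Real.pi * m) ^ 2 = Real.pi * m :=
      Real.sq_sqrt (by positivity)
    rw [div_pow, hs, lt_div_iff₀ (by positivity)]
    rw [hW, lt_div_iff₀ (by positivity)] at hkey
    calc C ^ 2 * (Real.pi * m) < 16 ^ m := by nlinarith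
      _ = (4 ^ m) ^ 2 := by rw [show (16:ℝ) = 4 ^ 2 by norm_num, ← pow_mul, pow_mul']
  have hpos : (0:ℝ) ≤ 4 ^ m / Real.sqrt (Real.pi * m) := by positivity
  exact lt_of_pow_lt_pow_left₀ 2 hpos hsq
end

section
/- For every positive integer m, binom(2m, m) ≥ (4^m / sqrt(π·m)) · exp(-1/(8m) - 1/(180·m^3)). -/
/-!
Write `s n = n! / (√(2n) (n/e)^n)` for the Stirling sequence, so that
`C(2m, m) = s(2m) / s(m)² · 4^m / √m` and `s n → √π`. Expanding
`log s n - log s (n+1)` as `∑ x^(2j) / (2j+1)` with `x = 1/(2n+1)`, Robbins' bound gives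
`log s n - log s (n+1) ≤ 1/(12n) - 1/(12(n+1))`, while the first two terms of the series dominate
the increments of `1/(12n) - 1/(360n³)`. Telescoping to the limit yields
`√π exp(1/(12n) - 1/(360n³)) ≤ s n ≤ √π exp(1/(12n))`; the lower bound at `2m` and the upper bound
at `m` give the estimate, with `-1/(2880m³)` in place of `-1/(180m³)`.
-/

open Filter Real Stirling
open scoped Topology

section Telescoping

variable {α : Type*} [AddCommGroup α] [PartialOrder α] [IsOrderedAddMonoid α]
  [TopologicalSpace α] [OrderClosedTopology α] [IsTopologicalAddGroup α]

theorem le_add_of_tendsto_of_sub_succ_le {u g : ℕ → α} {c : α} (hu : Tendsto u atTop (𝓝 c))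
    (hg : Tendsto g atTop (𝓝 0)) {n : ℕ} (h : ∀ k, n ≤ k → u k - u (k + 1) ≤ g k - g (k + 1)) :
    u n ≤ c + g n := by
  have hmono : Monotone fun k => u (k + n) - g (k + n) := by
    refine monotone_nat_of_le_succ fun k => ?_
    have := h (k + n) (Nat.le_add_left n k)
    rw [sub_le_sub_iff] at this
    rw [Nat.succ_add, sub_le_sub_iff]
    simpa only [add_comm] using this
  have hlim := (hu.comp (tendsto_add_atTop_nat n)).sub (hg.comp (tendsto_add_atTop_nat n))
  rw [sub_zero] at hlim
  simpa only [zero_add, sub_le_iff_le_add] using hmono.ge_of_tendsto hlim 0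

theorem add_le_of_tendsto_of_le_sub_succ {u g : ℕ → α} {c : α} (hu : Tendsto u atTop (𝓝 c))
    (hg : Tendsto g atTop (𝓝 0)) {n : ℕ} (h : ∀ k, n ≤ k → g k - g (k + 1) ≤ u k - u (k + 1)) :
    c + g n ≤ u n := by
  have := le_add_of_tendsto_of_sub_succ_le (u := fun k => -u k) (g := fun k => -g k) hu.neg
    (by simpa only [neg_zero] using hg.neg) fun k hk => by
      simpa only [neg_sub_neg, neg_sub] using neg_le_neg (h k hk)
  simpa only [← neg_add, neg_le_neg_iff] using this

end Telescoping

namespace Stirling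

theorem tendsto_log_stirlingSeq : Tendsto (fun n => log (stirlingSeq n)) atTop (𝓝 (log √π)) :=
  tendsto_stirlingSeq_sqrt_pi.log (sqrt_pos.mpr pi_pos).ne'

theorem stirlingSeq_pos {n : ℕ} (hn : n ≠ 0) : 0 < stirlingSeq n := by
  obtain ⟨k, rfl⟩ := Nat.exists_eq_succ_of_ne_zero hn
  exact stirlingSeq'_pos k

theorem le_log_stirlingSeq_sdiff {n : ℕ} (hn : n ≠ 0) :
    (1 / (2 * n + 1)) ^ 2 / 3 + (1 / (2 * n + 1)) ^ 4 / 5 ≤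
      log (stirlingSeq n) - log (stirlingSeq (n + 1)) := by
  obtain ⟨k, rfl⟩ := Nat.exists_eq_succ_of_ne_zero hn
  have h := sum_le_hasSum {0, 1} (fun j _ => by positivity) (log_stirlingSeq_sdiff_hasSum k)
  rw [Finset.sum_pair zero_ne_one] at h
  refine le_of_eq_of_le ?_ h
  norm_num
  ring

theorem log_stirlingSeq_le {n : ℕ} (hn : n ≠ 0) :
    log (stirlingSeq n) ≤ log √π + 1 / (12 * n) := by
  have hg : Tendsto (fun k : ℕ => 1 / (12 * (k : ℝ))) atTop (𝓝 0) :=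
    tendsto_const_nhds.div_atTop (tendsto_natCast_atTop_atTop.const_mul_atTop (by norm_num))
  refine le_add_of_tendsto_of_sub_succ_le tendsto_log_stirlingSeq hg fun k hk => ?_
  have hk0 : (0 : ℝ) < k := by exact_mod_cast Nat.pos_of_ne_zero (by omega)
  refine le_of_le_of_eq (log_stirlingSeq_sdiff_le k) ?_
  push_cast
  field_simp
  ring

theorem stirling_correction_sdiff_le {t : ℝ} (ht : 0 < t) :
    1 / (12 * t) - 1 / (360 * t ^ 3) - (1 / (12 * (t + 1)) - 1 / (360 * (t + 1) ^ 3)) ≤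
      (1 / (2 * t + 1)) ^ 2 / 3 + (1 / (2 * t + 1)) ^ 4 / 5 := by
  rw [← sub_nonneg]
  field_simp
  ring_nf
  positivity

theorem log_stirlingSeq_ge {n : ℕ} (hn : n ≠ 0) :
    log √π + (1 / (12 * n) - 1 / (360 * n ^ 3)) ≤ log (stirlingSeq n) := by
  have hg : Tendsto (fun k : ℕ => 1 / (12 * (k : ℝ)) - 1 / (360 * (k : ℝ) ^ 3)) atTop (𝓝 0) := by
    simpa only [sub_zero, Function.comp_apply] using
      (tendsto_const_nhds.div_atTop
        (tendsto_natCast_atTop_atTop.const_mul_atTop (by norm_num : (0 : ℝ) < 12))).sub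
      (tendsto_const_nhds.div_atTop ((tendsto_pow_atTop three_ne_zero).comp
        tendsto_natCast_atTop_atTop |>.const_mul_atTop (by norm_num : (0 : ℝ) < 360)))
  refine add_le_of_tendsto_of_le_sub_succ tendsto_log_stirlingSeq hg fun k hk => ?_
  have hk0 : (0 : ℝ) < k := by exact_mod_cast Nat.pos_of_ne_zero (by omega)
  exact_mod_cast (stirling_correction_sdiff_le hk0).trans (le_log_stirlingSeq_sdiff (by omega))

theorem stirlingSeq_le {n : ℕ} (hn : n ≠ 0) : stirlingSeq n ≤ √π * exp (1 / (12 * n)) := by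
  rw [← exp_log (stirlingSeq_pos hn), ← exp_log (by positivity : 0 < √π), ← exp_add]
  exact exp_le_exp.mpr (log_stirlingSeq_le hn)

theorem le_stirlingSeq {n : ℕ} (hn : n ≠ 0) :
    √π * exp (1 / (12 * n) - 1 / (360 * n ^ 3)) ≤ stirlingSeq n := by
  rw [← exp_log (stirlingSeq_pos hn), ← exp_log (by positivity : 0 < √π), ← exp_add]
  exact exp_le_exp.mpr (log_stirlingSeq_ge hn)

theorem choose_two_mul_self_eq_stirlingSeq {m : ℕ} (hm : m ≠ 0) :
    ((2 * m).choose m : ℝ) = stirlingSeq (2 * m) / stirlingSeq m ^ 2 * (4 ^ m / √m) := by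
  rw [Nat.cast_choose ℝ (by omega), show 2 * m - m = m by omega, stirlingSeq, stirlingSeq]
  have h4 : √(2 * ((2 * m : ℕ) : ℝ)) = 2 * √m := by
    rw [Nat.cast_mul, ← mul_assoc, Nat.cast_ofNat, show (2 * 2 : ℝ) = 2 ^ 2 by norm_num,
      sqrt_mul (by positivity), sqrt_sq (by norm_num)]
  rw [h4, pow_mul, Nat.cast_mul]
  field_simp
  rw [sq_sqrt (by positivity), sq_sqrt (by positivity)]
  ring

end Stirling

theorem stmt_4 (m : ℕ) (hm : 0 < m) :
    (Nat.choose (2 * m) m : ℝ) ≥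
      (4 ^ m / Real.sqrt (Real.pi * m)) *
        Real.exp (-1 / (8 * m) - 1 / (180 * (m : ℝ) ^ 3)) := by
  have hexponent : -1 / (8 * m) - 1 / (180 * (m : ℝ) ^ 3) ≤
      1 / (12 * (2 * m)) - 1 / (360 * (2 * m) ^ 3) - 2 * (1 / (12 * m)) := by
    rw [← sub_nonneg]
    field_simp
    ring_nf
    positivity
  calc 4 ^ m / √(π * m) * exp (-1 / (8 * m) - 1 / (180 * (m : ℝ) ^ 3))
      ≤ 4 ^ m / (√π * √m) *
          exp (1 / (12 * (2 * m)) - 1 / (360 * (2 * m) ^ 3) - 2 * (1 / (12 * m))) := by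
        rw [sqrt_mul pi_pos.le]
        gcongr
    _ = √π * exp (1 / (12 * (2 * m)) - 1 / (360 * (2 * m) ^ 3)) /
          (√π * exp (1 / (12 * m))) ^ 2 * (4 ^ m / √m) := by
        rw [exp_sub, mul_pow √π, two_mul (1 / (12 * (m : ℝ))), exp_add]
        field_simp
    _ ≤ stirlingSeq (2 * m) / stirlingSeq m ^ 2 * (4 ^ m / √m) := by
        have hlower := le_stirlingSeq (n := 2 * m) (by omega)
        push_cast at hlower
        have hupper := stirlingSeq_le hm.ne'
        have hpos := stirlingSeq_pos hm.ne'
        gcongr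
        exact (stirlingSeq_pos (by omega)).le
    _ = (2 * m).choose m := (choose_two_mul_self_eq_stirlingSeq hm.ne').symm
end

section
/- Define μ(h) = 1 + (h/2^h)·binom(h, h/2) for h a positive multiple of 4. Then for all such h, sqrt(2h/π) + 0.9 < μ(h) < sqrt(2h/π) + 1. -/
/-!
With `h = 2n` and `b = C(2n, n) / 4^n` we have `μ = 1 + 2nb`. Wallis' product gives
`W n * (2n + 1) * b^2 = 1` together with `(2n + 1)/(2n + 2) * π/2 ≤ W n ≤ π/2`,
i.e. `2 / (2n + 1) ≤ π b^2 ≤ 2 (2n + 2) / (2n + 1)^2`. The upper estimate yields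
`2nb < √(4n/π)` for every `n ≥ 1`; the lower one gives `√(4n/π) - 2nb < 1/10` once `n ≥ 8`,
and the remaining cases `h = 4, 8, 12` are checked numerically (at `h = 4` the margin is only
about `0.004`).
-/

open Real Nat

lemma Real.Wallis.W_mul_centralBinom_div_sq (n : ℕ) :
    Wallis.W n * (2 * n + 1) * ((centralBinom n : ℝ) / 4 ^ n) ^ 2 = 1 := by
  have hfac : ((2 * n)! : ℝ) = centralBinom n * n ! * n ! := by
    exact_mod_cast (centralBinom_eq_two_mul_choose n ▸ two_mul n ▸
      (Nat.add_choose_mul_factorial_mul_factorial n n)).symm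
  have hpow : (4 : ℝ) ^ n * 4 ^ n = 2 ^ (4 * n) := by
    rw [← mul_pow, pow_mul]; norm_num
  have := centralBinom_ne_zero n
  rw [Wallis.W_eq_factorial_ratio, hfac, ← hpow]
  field_simp

lemma two_le_pi_mul_centralBinom_div_sq (n : ℕ) :
    2 ≤ π * ((centralBinom n : ℝ) / 4 ^ n) ^ 2 * (2 * n + 1) := by
  have hW := Wallis.W_mul_centralBinom_div_sq n
  nlinarith [mul_le_mul_of_nonneg_right (Wallis.W_le n)
    (by positivity : (0 : ℝ) ≤ (2 * n + 1) * ((centralBinom n : ℝ) / 4 ^ n) ^ 2)]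

lemma pi_mul_centralBinom_div_sq_le (n : ℕ) :
    π * ((centralBinom n : ℝ) / 4 ^ n) ^ 2 * (2 * n + 1) ^ 2 ≤ 2 * (2 * n + 2) := by
  have hW := Wallis.W_mul_centralBinom_div_sq n
  have hle := Wallis.le_W n
  rw [div_mul_eq_mul_div, div_le_iff₀ (by positivity)] at hle
  nlinarith [mul_le_mul_of_nonneg_right hle
    (by positivity : (0 : ℝ) ≤ (2 * n + 1) * ((centralBinom n : ℝ) / 4 ^ n) ^ 2)]

lemma two_mul_centralBinom_div_lt_sqrt {n : ℕ} (hn : 0 < n) :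
    2 * n * ((centralBinom n : ℝ) / 4 ^ n) < √(4 * n / π) := by
  have hn' : (0 : ℝ) < n := by exact_mod_cast hn
  rw [lt_sqrt (by positivity), lt_div_iff₀ pi_pos]
  have hup := mul_le_mul_of_nonneg_left (pi_mul_centralBinom_div_sq_le n)
    (by positivity : (0 : ℝ) ≤ 4 * n ^ 2)
  have : (2 * n * ((centralBinom n : ℝ) / 4 ^ n)) ^ 2 * π * (2 * n + 1) ^ 2
      < 4 * n * (2 * n + 1) ^ 2 := by nlinarith
  exact lt_of_mul_lt_mul_right this (by positivity)

lemma sqrt_lt_two_mul_centralBinom_div_add_of_le {n : ℕ} (hn : 8 ≤ n) :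
    √(4 * n / π) < 2 * n * ((centralBinom n : ℝ) / 4 ^ n) + 1 / 10 := by
  set x := 2 * n * ((centralBinom n : ℝ) / 4 ^ n)
  set s := √(4 * n / π)
  have hs : s ^ 2 * π = 4 * n := by
    rw [sq_sqrt (by positivity), div_mul_cancel₀ _ pi_ne_zero]
  have hπ := pi_gt_d2
  have hs_gt : 3.18 < s := by
    have : (8 : ℝ) ≤ n := by exact_mod_cast hn
    nlinarith [pi_lt_d2, sqrt_nonneg (4 * n / π)]
  have hxs : 2 * n * s ^ 2 ≤ x ^ 2 * (2 * n + 1) := by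
    refine le_of_mul_le_mul_left ?_ pi_pos
    nlinarith [mul_le_mul_of_nonneg_left (two_le_pi_mul_centralBinom_div_sq n)
      (by positivity : (0 : ℝ) ≤ 4 * n ^ 2)]
  by_contra! hsx
  have hxs' : 2 * n * s ^ 2 ≤ (s - 1 / 10) ^ 2 * (2 * n + 1) := by
    have hx2 : x ^ 2 ≤ (s - 1 / 10) ^ 2 := pow_le_pow_left₀ (by positivity) (by linarith) 2
    exact hxs.trans (mul_le_mul_of_nonneg_right hx2 (by positivity))
  -- substituting `2 * n = π * s ^ 2 / 2` turns `hxs'` into a cubic inequality in `s`,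
  -- false for `s > 3.18`
  have hcubic : s ^ 2 ≥ (2 * s - 1 / 10) / 10 * (s ^ 2 * 3.14 / 2 + 1) := by
    nlinarith [mul_pos (by linarith : (0 : ℝ) < 2 * s - 1 / 10)
      (sq_pos_of_pos (by linarith : (0 : ℝ) < s))]
  nlinarith [mul_pos (by linarith : (0 : ℝ) < s - 3.18) (sq_pos_of_pos (by linarith : (0 : ℝ) < s)),
    mul_pos (by linarith : (0 : ℝ) < s - 3.18) (by linarith : (0 : ℝ) < s)]

lemma sqrt_lt_two_mul_centralBinom_div_add {n : ℕ} (hn : 2 ≤ n) (heven : Even n) :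
    √(4 * n / π) < 2 * n * ((centralBinom n : ℝ) / 4 ^ n) + 1 / 10 := by
  rcases le_or_gt 8 n with h8 | h8
  · exact sqrt_lt_two_mul_centralBinom_div_add_of_le h8
  obtain ⟨k, rfl⟩ := heven
  obtain ⟨hk1, hk3⟩ : 1 ≤ k ∧ k ≤ 3 := by omega
  rw [sqrt_lt' (by positivity), div_lt_iff₀ pi_pos]
  have hπ := pi_gt_d2
  interval_cases k <;> norm_num [centralBinom_eq_two_mul_choose, choose] <;> linarith

theorem stmt_5 (h : ℕ) (hh : 0 < h) (hdvd : 4 ∣ h)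
    (μ : ℝ) (hμ : μ = 1 + ((h : ℝ) / 2 ^ h) * (Nat.choose h (h / 2) : ℝ)) :
    Real.sqrt (2 * h / Real.pi) + 0.9 < μ ∧ μ < Real.sqrt (2 * h / Real.pi) + 1 := by
  obtain ⟨k, rfl⟩ := hdvd
  have hchoose : (4 * k).choose (4 * k / 2) = centralBinom (2 * k) := by
    rw [centralBinom_eq_two_mul_choose]; congr 1 <;> omega
  have hμ' : μ = 1 + 2 * (2 * k : ℕ) * ((centralBinom (2 * k) : ℝ) / 4 ^ (2 * k)) := by
    rw [hμ, hchoose, show 4 * k = 2 * (2 * k) by ring, pow_mul]; push_cast; ring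
  have hsqrt : 2 * ((4 * k : ℕ) : ℝ) / π = 4 * (2 * k : ℕ) / π := by push_cast; ring
  rw [hμ', hsqrt]
  constructor
  · linarith [sqrt_lt_two_mul_centralBinom_div_add (n := 2 * k) (by omega) (even_two_mul k)]
  · linarith [two_mul_centralBinom_div_lt_sqrt (n := 2 * k) (by omega)]
end

section
/- Define σ(h)^2 = 1 + (h(h-1)/2^(h+1))·binom(h/2, h/4)^2 - (h^2/2^(2h))·binom(h, h/2)^2 for h a positive multiple of 4. Then σ(h)^2 < 1 for all h ≥ 4 divisible by 4. -/
lemma mono_step (k : ℕ) :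
    16 * ((4*k+1) * Nat.centralBinom k ^ 2) < (4*(k+1)+1) * Nat.centralBinom (k+1) ^ 2 := by
  have hrec := Nat.succ_mul_centralBinom_succ k
  have hsq : ((k+1) * Nat.centralBinom (k+1))^2 = (2*(2*k+1)*Nat.centralBinom k)^2 := by
    rw [hrec]
  have hq : 0 < Nat.centralBinom k ^ 2 := by
    have := Nat.centralBinom_pos k; positivity
  have hkey : (k+1)^2 * (16 * ((4*k+1) * Nat.centralBinom k ^2))
      < (k+1)^2 * ((4*(k+1)+1) * Nat.centralBinom (k+1)^2) := by
    have e : (k+1)^2 * ((4*(k+1)+1)*Nat.centralBinom (k+1)^2)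
        = (4*k+5) * ((k+1)*Nat.centralBinom (k+1))^2 := by ring
    rw [e, hsq]
    nlinarith [hq]
  exact lt_of_mul_lt_mul_left hkey (Nat.zero_le _)

lemma mono_chain (k : ℕ) : ∀ d, 1 ≤ d →
    16^d * ((4*k+1) * Nat.centralBinom k ^ 2) < (4*(k+d)+1) * Nat.centralBinom (k+d) ^ 2 := by
  intro d hd
  induction d with
  | zero => omega
  | succ d ih =>
    rcases Nat.eq_zero_or_pos d with rfl | hd'
    · simpa using mono_step k
    · have step := mono_step (k+d)
      calc 16^(d+1) * ((4*k+1) * Nat.centralBinom k ^ 2)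
          = 16 * (16^d * ((4*k+1) * Nat.centralBinom k ^ 2)) := by ring
        _ < 16 * ((4*(k+d)+1) * Nat.centralBinom (k+d) ^ 2) := by
            have := ih hd'
            omega
        _ < (4*(k+(d+1))+1) * Nat.centralBinom (k+(d+1)) ^ 2 := by
            have e : k + (d+1) = (k+d) + 1 := by omega
            rw [e]
            exact step

lemma key_nat (n : ℕ) (hn : 1 ≤ n) :
    (4*n-1) * 16^n * Nat.centralBinom n ^ 2 < 8*n * Nat.centralBinom (2*n) ^ 2 := by
  have key := mono_chain n n hn
  have e2 : n + n = 2*n := by omega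
  rw [e2] at key
  set a := Nat.centralBinom n ^ 2 with ha
  set b := Nat.centralBinom (2*n) ^ 2 with hb
  have key' : 16^n * ((4*n+1) * a) < (8*n+1) * b := by
    have e : 4*(2*n)+1 = 8*n+1 := by omega
    rw [e] at key; exact key
  set c := 4*n - 1 with hc
  have hc4 : c + 1 = 4*n := by omega
  have h1 : (8*n+1) * (c * 16^n * a) ≤ (8*n) * (16^n * ((4*n+1) * a)) := by
    have hcc : (8*n+1) * c ≤ 8*n * (4*n+1) := by nlinarith [hc4]
    calc (8*n+1) * (c * 16^n * a) = ((8*n+1) * c) * (16^n * a) := by ring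
      _ ≤ (8*n * (4*n+1)) * (16^n * a) := Nat.mul_le_mul_right _ hcc
      _ = 8*n * (16^n * ((4*n+1) * a)) := by ring
  have h2 : 8*n * (16^n * ((4*n+1) * a)) < 8*n * ((8*n+1) * b) :=
    mul_lt_mul_of_pos_left key' (by omega)
  have h3 : (8*n+1) * (c * 16^n * a) < (8*n+1) * (8*n * b) := by
    calc (8*n+1) * (c * 16^n * a) ≤ 8*n * (16^n * ((4*n+1) * a)) := h1
      _ < 8*n * ((8*n+1) * b) := h2
      _ = (8*n+1) * (8*n * b) := by ring
  exact lt_of_mul_lt_mul_left h3 (Nat.zero_le _)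

theorem stmt_6 (h : ℕ) (hh : 4 ≤ h) (hdvd : 4 ∣ h) :
    1 + ((h : ℝ) * ((h : ℝ) - 1) / 2 ^ (h + 1)) * (Nat.choose (h / 2) (h / 4) : ℝ) ^ 2
      - ((h : ℝ) ^ 2 / 2 ^ (2 * h)) * (Nat.choose h (h / 2) : ℝ) ^ 2 < 1 := by
  obtain ⟨n, rfl⟩ := hdvd
  have hn : 1 ≤ n := by omega
  have e1 : 4 * n / 2 = 2 * n := by omega
  have e2 : 4 * n / 4 = n := by omega
  rw [e1, e2]
  have ea : Nat.choose (2*n) n = Nat.centralBinom n := rfl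
  have eb : Nat.choose (4*n) (2*n) = Nat.centralBinom (2*n) := by
    unfold Nat.centralBinom
    congr 1
    omega
  rw [ea, eb]
  have key := key_nat n hn
  have keyR0 : ((4*n-1 : ℕ):ℝ) * 16^n * (Nat.centralBinom n : ℝ)^2
      < 8*(n:ℝ) * (Nat.centralBinom (2*n) : ℝ)^2 := by exact_mod_cast key
  set a : ℝ := (Nat.centralBinom n : ℝ) with ha
  set b : ℝ := (Nat.centralBinom (2*n) : ℝ) with hb
  have h41 : ((4*n-1:ℕ):ℝ) = 4*(n:ℝ) - 1 := by
    rw [Nat.cast_sub (by omega : 1 ≤ 4*n)]; push_cast; ring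
  rw [h41] at keyR0
  have hpow : (16:ℝ)^n = 2^(4*n) := by
    rw [show (16:ℝ) = 2^4 by norm_num, ← pow_mul]
  rw [hpow] at keyR0
  have hX : ((4*n:ℕ) : ℝ) * (((4*n:ℕ):ℝ) - 1) / 2 ^ (4*n + 1) * a ^ 2
      < ((4*n:ℕ):ℝ) ^ 2 / 2 ^ (2 * (4*n)) * b ^ 2 := by
    push_cast
    rw [div_mul_eq_mul_div, div_mul_eq_mul_div, div_lt_div_iff₀ (by positivity) (by positivity)]
    have e3 : (2:ℝ) ^ (2*(4*n)) = 2^(4*n) * 2^(4*n) := by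
      rw [← pow_add]; congr 1; omega
    have e4 : (2:ℝ) ^ (4*n+1) = 2 * 2^(4*n) := by
      rw [pow_succ]; ring
    rw [e3, e4]
    have hp : (0:ℝ) < 2^(4*n) := by positivity
    have hn' : (1:ℝ) ≤ (n:ℝ) := by exact_mod_cast hn
    nlinarith [mul_lt_mul_of_pos_left keyR0 (show (0:ℝ) < 4*(n:ℝ)*2^(4*n) by positivity)]
  linarith
end

section
/- For a positive integer k, let X_1, ..., X_{4k} be independent uniform random variables on {-1, +1}. Let S_1 = X_1 + ... + X_{4k} and S_2 = (X_1 + ... + X_{2k}) - (X_{2k+1} + ... + X_{4k}). Then E[|S_1·S_2|] = (4k)^2 / 2^{4k+1} · binom(2k, k)^2. -/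
/-!
Pair the coordinates `i` and `2k + i`. In each pair exactly one of `X_i + X_{2k+i}` and
`X_i - X_{2k+i}` vanishes and the other is `±2 X_i`; the set `T` of pairs with different signs and
the signs `X_i` are independent and uniform. Hence `|S₁ S₂| = 4 |∑_{i ∉ T} X_i| |∑_{i ∈ T} X_i|`,
and summing over the signs first gives `4 ∑_m C(2k, m) A(2k - m) A(m)`, where
`A(n) = ∑_{x ∈ {±1}^n} |x₁ + ⋯ + xₙ| = 2n C(n - 1, ⌊(n - 1)/2⌋)`. Through factorials the `m`-th
term is `4k² C(2k, k) C(k - 1, ⌊(m - 1)/2⌋) C(k - 1, ⌊m/2⌋)`, and a Vandermonde convolution sums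
these to `2k² C(2k, k)²`.
-/

open Finset

noncomputable def boolSign (b : Bool) : ℝ := if b then 1 else -1

/-- `∑_{x ∈ {±1}^n} |x₁ + ⋯ + xₙ|`, grouped by the numbers `(i, j)` of entries `+1` and `-1`. -/
noncomputable def absSignSum (n : ℕ) : ℝ :=
  ∑ p ∈ antidiagonal n, (n.choose p.1 : ℝ) * |(p.1 : ℝ) - p.2|

theorem boolSign_not (b : Bool) : boolSign (!b) = -boolSign b := by
  cases b <;> simp [boolSign]

section SignSums

variable {α : Type*} [Fintype α]

theorem sum_fun_bool_eq_sum_choose [DecidableEq α] {M : Type*} [AddCommMonoid M] (G : ℕ → M) :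
    ∑ σ : α → Bool, G #{i | σ i} =
      ∑ m ∈ range (Fintype.card α + 1), (Fintype.card α).choose m • G m := by
  let e : (α → Bool) ≃ Finset α :=
    { toFun σ := {i | σ i}, invFun s i := i ∈ s,
      left_inv σ := by ext i; simp, right_inv s := by ext i; simp }
  rw [← card_univ, ← sum_powerset_apply_card, powerset_univ]
  exact Fintype.sum_equiv e _ _ fun _ => rfl

theorem sum_boolSign_eq_card_filter_sub (x : α → Bool) :
    ∑ i, boolSign (x i) = #{i | x i} - (Fintype.card α - #{i | x i} : ℕ) := by
  classical
  rw [← card_compl, compl_filter]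
  simp [boolSign, sum_ite, sub_eq_add_neg]

theorem sum_abs_sum_boolSign [DecidableEq α] :
    ∑ x : α → Bool, |∑ i, boolSign (x i)| = absSignSum (Fintype.card α) := by
  simp only [sum_boolSign_eq_card_filter_sub]
  rw [sum_fun_bool_eq_sum_choose (fun m => |(m : ℝ) - (Fintype.card α - m : ℕ)|), absSignSum,
    Nat.sum_antidiagonal_eq_sum_range_succ_mk]
  simp only [nsmul_eq_mul]

theorem sum_abs_sum_boolSign_compl_mul [DecidableEq α] (s : Finset α) :
    ∑ x : α → Bool, |∑ i ∈ sᶜ, boolSign (x i)| * |∑ i ∈ s, boolSign (x i)| =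
      absSignSum #sᶜ * absSignSum #s := by
  let e := Equiv.piEquivPiSubtypeProd (· ∈ s) fun _ => Bool
  rw [← e.symm.sum_comp, Fintype.sum_prod_type, sum_comm]
  have hs (y : s → Bool) (z : {i // i ∉ s} → Bool) :
      ∑ i ∈ s, boolSign (e.symm (y, z) i) = ∑ i : s, boolSign (y i) := by
    rw [← sum_coe_sort s]
    exact sum_congr rfl fun i _ => by simp [e, i.2]
  have hsc (y : s → Bool) (z : {i // i ∉ s} → Bool) :
      ∑ i ∈ sᶜ, boolSign (e.symm (y, z) i) = ∑ i : {i // i ∉ s}, boolSign (z i) := by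
    rw [sum_subtype sᶜ (p := (· ∉ s)) (by simp)]
    exact sum_congr rfl fun i _ => by simp [e, i.2]
  simp only [hs, hsc, ← mul_sum, ← sum_mul, sum_abs_sum_boolSign]
  rw [Fintype.card_coe, Fintype.card_subtype_compl, Fintype.card_coe, card_compl, mul_comm]

theorem sum_sum_abs_add_mul_sub [DecidableEq α] :
    ∑ a : α → Bool, ∑ c : α → Bool,
      |(∑ i, boolSign (a i) + ∑ i, boolSign (c i)) * (∑ i, boolSign (a i) - ∑ i, boolSign (c i))| =
      4 * ∑ m ∈ range (Fintype.card α + 1),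
        (Fintype.card α).choose m * (absSignSum (Fintype.card α - m) * absSignSum m) := by
  have hpair (a σ : α → Bool) :
      |(∑ i, boolSign (a i) + ∑ i, boolSign (xor (σ i) (a i))) *
          (∑ i, boolSign (a i) - ∑ i, boolSign (xor (σ i) (a i)))| =
        4 * (|∑ i ∈ ({i | σ i} : Finset α)ᶜ, boolSign (a i)| *
          |∑ i ∈ {i | σ i}, boolSign (a i)|) := by
    set t : Finset α := {i | σ i}
    have hxor : ∑ i, boolSign (xor (σ i) (a i)) =
        -∑ i ∈ t, boolSign (a i) + ∑ i ∈ tᶜ, boolSign (a i) := by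
      rw [← sum_add_sum_compl t, ← sum_neg_distrib]
      congr 1 <;> refine sum_congr rfl fun i hi => ?_ <;> simp_all [t, boolSign_not]
    rw [hxor, ← sum_add_sum_compl t, ← abs_of_pos (four_pos (α := ℝ)), ← abs_mul, ← abs_mul]
    ring_nf
  have hxor_involutive (a : α → Bool) : Function.Involutive fun σ i => xor (σ i) (a i) :=
    fun σ => by simp
  calc _ = ∑ a : α → Bool, ∑ σ : α → Bool,
        4 * (|∑ i ∈ ({i | σ i} : Finset α)ᶜ, boolSign (a i)| *
          |∑ i ∈ {i | σ i}, boolSign (a i)|) := by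
        refine sum_congr rfl fun a _ => ?_
        rw [← Equiv.sum_comp (hxor_involutive a).toPerm]
        exact sum_congr rfl fun σ _ => hpair a σ
    _ = _ := by
      rw [sum_comm]
      simp only [← mul_sum, sum_abs_sum_boolSign_compl_mul, card_compl]
      rw [sum_fun_bool_eq_sum_choose (fun m => absSignSum (Fintype.card α - m) * absSignSum m)]
      simp only [nsmul_eq_mul]

end SignSums

theorem sum_fun_fin_add_self_eq_sum_sum (n : ℕ) (F : ℝ → ℝ → ℝ) :
    ∑ b : Fin (n + n) → Bool,
        F (∑ j, boolSign (b j))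
          (∑ j : Fin (n + n), if (j : ℕ) < n then boolSign (b j) else -boolSign (b j)) =
      ∑ a : Fin n → Bool, ∑ c : Fin n → Bool,
        F (∑ i, boolSign (a i) + ∑ i, boolSign (c i)) (∑ i, boolSign (a i) - ∑ i, boolSign (c i)) := by
  rw [← Fintype.sum_prod_type', ← (Fin.appendEquiv n n).sum_comp]
  simp only [Fin.appendEquiv_apply, Fin.sum_univ_add, Fin.append_left, Fin.append_right,
    Fin.val_castAdd, Fin.val_natAdd, Fin.is_lt, if_pos, add_lt_iff_neg_left, not_lt_zero,
    if_false, sum_neg_distrib, ← sub_eq_add_neg]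

theorem abs_sub_succ_add_abs_succ_sub (i j : ℕ) :
    |(i : ℝ) - (j + 1 : ℕ)| + |((i + 1 : ℕ) : ℝ) - j| =
      2 * |(i : ℝ) - j| + if i = j then 2 else 0 := by
  push_cast
  rcases lt_trichotomy i j with h | rfl | h
  · have h' : (i : ℝ) + 1 ≤ j := by exact_mod_cast h
    rw [if_neg h.ne, abs_of_neg (by linarith), abs_of_nonpos (by linarith),
      abs_of_neg (by linarith)]
    ring
  · norm_num
  · have h' : (j : ℝ) + 1 ≤ i := by exact_mod_cast h
    rw [if_neg h.ne', abs_of_nonneg (by linarith), abs_of_pos (by linarith),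
      abs_of_pos (by linarith)]
    ring

theorem sum_antidiagonal_ite_fst_eq_snd {M : Type*} [AddCommMonoid M] (f : ℕ → M) (n : ℕ) :
    ∑ p ∈ antidiagonal n, (if p.1 = p.2 then f p.1 else 0) = if Even n then f (n / 2) else 0 := by
  rw [← sum_filter]
  rcases Nat.even_or_odd' n with ⟨r, rfl | rfl⟩
  · have : {p ∈ antidiagonal (2 * r) | p.1 = p.2} = {(r, r)} := by
      ext ⟨a, b⟩
      simp only [mem_filter, HasAntidiagonal.mem_antidiagonal, mem_singleton, Prod.mk.injEq]
      omega
    simp [this]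
  · have : {p ∈ antidiagonal (2 * r + 1) | p.1 = p.2} = ∅ := by
      ext ⟨a, b⟩
      simp only [mem_filter, HasAntidiagonal.mem_antidiagonal, notMem_empty, iff_false]
      omega
    simp [this, Nat.not_even_bit1]

theorem absSignSum_zero : absSignSum 0 = 0 := by
  simp [absSignSum]

theorem absSignSum_succ (n : ℕ) :
    absSignSum (n + 1) = 2 * absSignSum n + if Even n then 2 * (n.choose (n / 2) : ℝ) else 0 := by
  rw [absSignSum, sum_antidiagonal_choose_succ_mul (fun i j => |(i : ℝ) - j|)]
  have hsymm : ∀ p ∈ antidiagonal n, (n.choose p.2 : ℝ) * |((p.1 + 1 : ℕ) : ℝ) - p.2| =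
      (n.choose p.1 : ℝ) * |((p.1 + 1 : ℕ) : ℝ) - p.2| := by
    intro p hp
    rw [Nat.choose_symm_of_eq_add (HasAntidiagonal.mem_antidiagonal.mp hp).symm]
  have hterm : ∀ p ∈ antidiagonal n, (n.choose p.1 : ℝ) * |(p.1 : ℝ) - (p.2 + 1 : ℕ)| +
      (n.choose p.1 : ℝ) * |((p.1 + 1 : ℕ) : ℝ) - p.2| =
      2 * ((n.choose p.1 : ℝ) * |(p.1 : ℝ) - p.2|) +
        if p.1 = p.2 then (n.choose p.1 : ℝ) * 2 else 0 := by
    intro p _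
    rw [← mul_add, abs_sub_succ_add_abs_succ_sub]
    split_ifs <;> ring
  rw [sum_congr rfl hsymm, ← sum_add_distrib, sum_congr rfl hterm, sum_add_distrib, ← mul_sum,
    sum_antidiagonal_ite_fst_eq_snd (fun i => (n.choose i : ℝ) * 2), absSignSum]
  split_ifs <;> ring

theorem choose_two_mul_succ (n : ℕ) :
    (2 * (n + 1)).choose (n + 1) = 2 * (2 * n + 1).choose n := by
  rw [Nat.mul_add_one, Nat.choose_succ_succ, Nat.choose_symm_half, ← two_mul]

theorem absSignSum_succ_eq_mul_choose (n : ℕ) :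
    absSignSum (n + 1) = 2 * (n + 1) * n.choose (n / 2) := by
  induction n with
  | zero => simp [absSignSum_succ, absSignSum_zero]
  | succ n ih =>
    rw [absSignSum_succ, ih]
    rcases Nat.even_or_odd' n with ⟨r, rfl | rfl⟩
    · have h : (2 * r + 1) * (2 * r).choose r = (r + 1) * (2 * r + 1).choose r := by
        rw [Nat.add_one_mul_choose_eq, ← Nat.choose_symm_half, mul_comm]
      have h' : ((2 * r + 1 : ℕ) : ℝ) * (2 * r).choose r = (r + 1 : ℕ) * (2 * r + 1).choose r := by
        exact_mod_cast h
      rw [if_neg (Nat.not_even_bit1 r), show (2 * r + 1) / 2 = r by omega,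
        show 2 * r / 2 = r by omega]
      push_cast at h' ⊢
      linear_combination 4 * h'
    · rw [if_pos (by rw [Nat.even_add_one]; exact Nat.not_even_bit1 r),
        show (2 * r + 1) / 2 = r by omega, show (2 * r + 1 + 1) / 2 = r + 1 by omega,
        show 2 * r + 1 + 1 = 2 * (r + 1) by ring, choose_two_mul_succ]
      push_cast
      ring

/-- Both sides equal `(a + b + c + d + 2)! / (a! b! c! d!)`. -/
theorem add_choose_mul_mul_eq (a b c d : ℕ) (h : a + d = b + c) :
    (a + b + 1 + (c + d + 1)).choose (a + b + 1) * ((a + b + 1) * (a + b).choose a) *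
        ((c + d + 1) * (c + d).choose c) =
      (a + d + 1) ^ 2 * (a + d + 1 + (a + d + 1)).choose (a + d + 1) * (a + d).choose a *
        (b + c).choose b := by
  have hN : a + d + 1 + (a + d + 1) = a + b + 1 + (c + d + 1) := by omega
  suffices ((a + b + 1 + (c + d + 1)).choose (a + b + 1) : ℝ) *
      ((a + b + 1) * (a + b).choose a) * ((c + d + 1) * (c + d).choose c) =
      (a + d + 1) ^ 2 * (a + d + 1 + (a + d + 1)).choose (a + d + 1) * (a + d).choose a *
        (b + c).choose b by exact_mod_cast this
  simp only [Nat.cast_add_choose]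
  rw [hN, ← h]
  simp only [Nat.factorial_succ]
  push_cast
  field_simp

theorem sum_range_two_mul {M : Type*} [AddCommMonoid M] (f : ℕ → M) (n : ℕ) :
    ∑ j ∈ range (2 * n), f j = ∑ i ∈ range n, (f (2 * i) + f (2 * i + 1)) := by
  induction n with
  | zero => simp
  | succ n ih => rw [Nat.mul_add_one, sum_range_succ, sum_range_succ, sum_range_succ, ih, add_assoc]

/-- Pairing `j = 2i, 2i + 1` and Pascal's rule give the Vandermonde sum `∑ C(K, i) C(K + 1, K - i)`. -/
theorem sum_range_choose_half_mul_choose_half_succ (K : ℕ) :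
    ∑ j ∈ range (2 * K + 1), K.choose (j / 2) * K.choose ((j + 1) / 2) = (2 * K + 1).choose K := by
  have hlast : ∑ j ∈ range (2 * (K + 1)), K.choose (j / 2) * K.choose ((j + 1) / 2) =
      ∑ j ∈ range (2 * K + 1), K.choose (j / 2) * K.choose ((j + 1) / 2) := by
    rw [Nat.mul_add_one, sum_range_succ, show (2 * K + 1 + 1) / 2 = K + 1 by omega,
      Nat.choose_succ_self, mul_zero, add_zero]
  have hpascal : ∀ i ∈ range (K + 1), K.choose (2 * i / 2) * K.choose ((2 * i + 1) / 2) +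
      K.choose ((2 * i + 1) / 2) * K.choose ((2 * i + 1 + 1) / 2) =
      K.choose i * (K + 1).choose (K - i) := by
    intro i hi
    rw [Nat.choose_symm_of_eq_add (show K + 1 = (K - i) + (i + 1) by grind), Nat.choose_succ_succ,
      show 2 * i / 2 = i by omega, show (2 * i + 1) / 2 = i by omega,
      show (2 * i + 1 + 1) / 2 = i + 1 by omega, mul_add]
  rw [← hlast, sum_range_two_mul, sum_congr rfl hpascal, ← Nat.sum_antidiagonal_eq_sum_range_succ
    (fun i j => K.choose i * (K + 1).choose j), ← Nat.add_choose_eq, two_mul, add_assoc]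

theorem sum_choose_mul_absSignSum_mul_absSignSum (k : ℕ) :
    ∑ m ∈ range (2 * k + 1), ((2 * k).choose m : ℝ) * (absSignSum (2 * k - m) * absSignSum m) =
      2 * k ^ 2 * ((2 * k).choose k : ℝ) ^ 2 := by
  rcases k with _ | K
  · simp [absSignSum_zero]
  have hterm : ∀ j ∈ range (2 * K + 1),
      ((2 * (K + 1)).choose (j + 1) : ℝ) *
          (absSignSum (2 * (K + 1) - (j + 1)) * absSignSum (j + 1)) =
        4 * (K + 1) ^ 2 * (2 * (K + 1)).choose (K + 1) *
          (K.choose (j / 2) * K.choose ((j + 1) / 2) : ℕ) := by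
    intro j hj
    have hj : j ≤ 2 * K := by rw [mem_range] at hj; omega
    have h := add_choose_mul_mul_eq (j / 2) ((j + 1) / 2) ((2 * K - j) / 2) ((2 * K - j + 1) / 2)
      (by omega)
    rw [show j / 2 + (j + 1) / 2 = j by omega,
      show (2 * K - j) / 2 + (2 * K - j + 1) / 2 = 2 * K - j by omega,
      show j / 2 + (2 * K - j + 1) / 2 = K by omega, show (j + 1) / 2 + (2 * K - j) / 2 = K by omega,
      show j + 1 + (2 * K - j + 1) = 2 * (K + 1) by omega, ← two_mul] at h
    rw [show 2 * (K + 1) - (j + 1) = 2 * K - j + 1 by omega, absSignSum_succ_eq_mul_choose,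
      absSignSum_succ_eq_mul_choose]
    have h' := congrArg (Nat.cast : ℕ → ℝ) h
    push_cast at h' ⊢
    linear_combination 4 * h'
  have hodd : 2 * (K + 1) = 2 * K + 1 + 1 := by ring
  rw [sum_range_succ', hodd, sum_range_succ, ← hodd]
  simp only [Nat.sub_self, Nat.sub_zero, absSignSum_zero, mul_zero, zero_mul, add_zero]
  rw [sum_congr rfl hterm, ← mul_sum, ← Nat.cast_sum, sum_range_choose_half_mul_choose_half_succ,
    choose_two_mul_succ]
  push_cast
  ring

theorem stmt_7_general (k : ℕ) :
    (∑ b : Fin (4 * k) → Bool,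
        |(∑ j : Fin (4 * k), (if b j then (1 : ℝ) else -1)) *
          (∑ j : Fin (4 * k),
            (if (j : ℕ) < 2 * k then (if b j then (1 : ℝ) else -1)
             else -(if b j then (1 : ℝ) else -1)))|) / 2 ^ (4 * k)
      = ((4 * k : ℝ) ^ 2 / 2 ^ (4 * k + 1)) * (Nat.choose (2 * k) k : ℝ) ^ 2 := by
  have h := sum_fun_fin_add_self_eq_sum_sum (2 * k) fun x y => |x * y|
  rw [sum_sum_abs_add_mul_sub, Fintype.card_fin, sum_choose_mul_absSignSum_mul_absSignSum] at h
  simp only [boolSign] at h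
  rw [show 4 * k = 2 * k + 2 * k by ring, h]
  field_simp
  ring

theorem stmt_7 (k : ℕ) (hk : 0 < k) :
    (∑ b : Fin (4 * k) → Bool,
        |(∑ j : Fin (4 * k), (if b j then (1 : ℝ) else -1)) *
          (∑ j : Fin (4 * k),
            (if (j : ℕ) < 2 * k then (if b j then (1 : ℝ) else -1)
             else -(if b j then (1 : ℝ) else -1)))|) / 2 ^ (4 * k)
      = ((4 * k : ℝ) ^ 2 / 2 ^ (4 * k + 1)) * (Nat.choose (2 * k) k : ℝ) ^ 2 :=
  stmt_7_general k
end

section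
/- For a positive integer k, the double sum over p from -k to k and q from -k to k of binom(2k, k+p)·binom(2k, k+q)·|p^2 - q^2| equals 2·k^2·binom(2k, k)^2. -/
/-!
Write `x = 2i - n` for the endpoint of a `±1` walk of length `n` with `i` up-steps, and let
`S n = ∑ C(n,i) C(n,j) |x² - y²|` over pairs of such endpoints; the sum in the theorem is
`S (2k) / 4` (substitute `p = i - k`, `q = j - k`). Extending both walks by one step, the
four values `|(x ± 1)² - (y ± 1)²|` add up to `4 |x² - y²|`, plus `8 |x|` on each diagonal
`y = ±x` (write them as `|u ± 2| |v|`, `|u| |v ± 2|` with `u = x - y`, `v = x + y`, both even).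
Hence `S (n + 1) = 4 S n + 16 ∑ C(n,i)² |2i - n|`. The last sum telescopes, since
`(2i - n) C(n,i)² = n (C(n-1,i-1)² - C(n-1,i)²)`, to `2n C(n-1,⌊n/2⌋)²`, and the recursion
then solves to `S (2m) = 8 m² C(2m,m)²`.
-/

open Finset

lemma abs_add_two_add_abs_sub_two {u : ℤ} (hu : Even u) :
    |u + 2| + |u - 2| = 2 * |u| + if u = 0 then 4 else 0 := by
  obtain ⟨c, rfl⟩ := hu
  rcases abs_cases (c + c) with h | h <;> rcases abs_cases (c + c + 2) with h' | h' <;>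
    rcases abs_cases (c + c - 2) with h'' | h'' <;> split_ifs <;> omega

lemma sum_abs_sq_sub_sq_neighbours {a b : ℤ} (hab : Even (a - b)) :
    |(a + 1) ^ 2 - (b + 1) ^ 2| + |(a + 1) ^ 2 - (b - 1) ^ 2| + |(a - 1) ^ 2 - (b + 1) ^ 2|
        + |(a - 1) ^ 2 - (b - 1) ^ 2|
      = 4 * |a ^ 2 - b ^ 2| + 8 * ((if b = a then |a| else 0) + if b = -a then |a| else 0) := by
  have hab' : Even (a + b) := by
    simpa [show a + b = a - b + 2 * b by ring] using hab.add (even_two_mul b)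
  calc _ = |a - b| * (|a + b + 2| + |a + b - 2|) + |a + b| * (|a - b + 2| + |a - b - 2|) := by
        rw [show (a + 1) ^ 2 - (b + 1) ^ 2 = (a - b) * (a + b + 2) by ring,
          show (a + 1) ^ 2 - (b - 1) ^ 2 = (a - b + 2) * (a + b) by ring,
          show (a - 1) ^ 2 - (b + 1) ^ 2 = (a - b - 2) * (a + b) by ring,
          show (a - 1) ^ 2 - (b - 1) ^ 2 = (a - b) * (a + b - 2) by ring]
        simp only [abs_mul]
        ring
    _ = _ := by
      rw [abs_add_two_add_abs_sub_two hab, abs_add_two_add_abs_sub_two hab',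
        show a ^ 2 - b ^ 2 = (a - b) * (a + b) by ring, abs_mul]
      -- once the common product `|a - b| * |a + b|` is isolated, the identity is piecewise linear
      rw [mul_add, mul_add, mul_ite, mul_ite, mul_zero, mul_zero,
        show ∀ P Q R S : ℤ, P * (2 * Q) + R + (Q * (2 * P) + S) = 4 * (P * Q) + R + S by
          intros; ring]
      generalize |a - b| * |a + b| = P
      rcases abs_cases a with ⟨_, _⟩ | ⟨_, _⟩ <;>
        rcases abs_cases (a - b) with ⟨_, _⟩ | ⟨_, _⟩ <;>
        rcases abs_cases (a + b) with ⟨_, _⟩ | ⟨_, _⟩ <;> split_ifs <;> omega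

lemma two_mul_add_one_sub_mul_choose_succ_sq (m j : ℕ) :
    (2 * j + 1 - m : ℤ) * ((m + 1).choose (j + 1) : ℤ) ^ 2
      = (m + 1) * ((m.choose j : ℤ) ^ 2 - (m.choose (j + 1) : ℤ) ^ 2) := by
  have hmul : ((m : ℤ) + 1) * m.choose j = (m + 1).choose (j + 1) * (j + 1) := by
    exact_mod_cast Nat.add_one_mul_choose_eq m j
  rw [Nat.choose_succ_succ] at hmul ⊢
  push_cast at hmul ⊢
  linear_combination (-2 * ((m.choose j : ℤ) + m.choose (j + 1))) * hmul

lemma sum_Icc_neg_eq_sum_range {M : Type*} [AddCommMonoid M] (k : ℕ) (f : ℤ → M) :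
    ∑ p ∈ Icc (-(k : ℤ)) k, f p = ∑ i ∈ range (2 * k + 1), f (i - k) := by
  refine sum_nbij' (fun p => (p + k).toNat) (fun i => (i : ℤ) - k) ?_ ?_ ?_ ?_ ?_ <;>
    intro a ha <;> simp only [mem_Icc, mem_range] at ha ⊢ <;> first | omega | (congr 1; omega)

def walkSum (n : ℕ) (f : ℤ → ℤ) : ℤ :=
  ∑ i ∈ range (n + 1), (n.choose i : ℤ) * f (2 * i - n)

lemma walkSum_congr {n : ℕ} {f g : ℤ → ℤ} (h : ∀ i ≤ n, f (2 * i - n) = g (2 * i - n)) :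
    walkSum n f = walkSum n g :=
  sum_congr rfl fun i hi => by rw [h i (Nat.lt_succ_iff.mp (mem_range.mp hi))]

lemma walkSum_add (n : ℕ) (f g : ℤ → ℤ) :
    walkSum n (fun x => f x + g x) = walkSum n f + walkSum n g := by
  simp only [walkSum, mul_add, sum_add_distrib]

lemma walkSum_const_mul (n : ℕ) (c : ℤ) (f : ℤ → ℤ) :
    walkSum n (fun x => c * f x) = c * walkSum n f := by
  simp only [walkSum, mul_sum, mul_left_comm]

lemma walkSum_succ (n : ℕ) (f : ℤ → ℤ) :
    walkSum (n + 1) f = walkSum n (fun x => f (x - 1) + f (x + 1)) := by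
  convert sum_choose_succ_mul (R := ℤ) (fun i j => f (i - j)) n using 1
  · refine sum_congr rfl fun i hi => ?_
    have := mem_range.mp hi
    congr 2
    omega
  · rw [walkSum, ← sum_add_distrib]
    refine sum_congr rfl fun i hi => ?_
    have := mem_range.mp hi
    rw [mul_add]
    congr 3 <;> omega

lemma walkSum_comp_neg (n : ℕ) (f : ℤ → ℤ) : walkSum n (fun x => f (-x)) = walkSum n f := by
  rw [walkSum, ← sum_range_reflect]
  refine sum_congr rfl fun i hi => ?_
  have := mem_range.mp hi
  rw [Nat.add_sub_cancel, Nat.choose_symm (by omega)]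
  congr 2
  omega

lemma walkSum_ite_eq (n : ℕ) {i : ℕ} (hi : i ≤ n) (c : ℤ) :
    walkSum n (fun y => if y = 2 * i - n then c else 0) = n.choose i * c := by
  rw [walkSum, sum_eq_single i]
  · simp
  · intro j _ hji
    rw [if_neg (by omega), mul_zero]
  · intro h
    exact absurd (mem_range.mpr (by omega)) h

lemma walkSum_ite_eq_add_ite_eq_neg (n : ℕ) {i : ℕ} (hi : i ≤ n) (c : ℤ) :
    walkSum n (fun y => (if y = 2 * i - n then c else 0) + if y = -(2 * i - n : ℤ) then c else 0)
      = 2 * n.choose i * c := by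
  simp only [walkSum_add, ← neg_eq_iff_eq_neg]
  rw [walkSum_comp_neg n (fun y => if y = 2 * i - n then c else 0), walkSum_ite_eq n hi]
  ring

def walkSqGapSum (n : ℕ) : ℤ :=
  walkSum n fun x => walkSum n fun y => |x ^ 2 - y ^ 2|

def chooseSqAbsDevSum (n : ℕ) : ℤ :=
  ∑ i ∈ range (n + 1), (n.choose i : ℤ) ^ 2 * |2 * (i : ℤ) - n|

lemma walkSqGapSum_succ (n : ℕ) :
    walkSqGapSum (n + 1) = 4 * walkSqGapSum n + 16 * chooseSqAbsDevSum n := by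
  calc walkSqGapSum (n + 1)
      = walkSum n fun x => walkSum n fun y =>
          |(x - 1) ^ 2 - (y - 1) ^ 2| + |(x - 1) ^ 2 - (y + 1) ^ 2|
            + (|(x + 1) ^ 2 - (y - 1) ^ 2| + |(x + 1) ^ 2 - (y + 1) ^ 2|) := by
        simp only [walkSqGapSum, walkSum_succ, walkSum_add]
    _ = walkSum n fun x => 4 * walkSum n (fun y => |x ^ 2 - y ^ 2|)
          + 8 * walkSum n (fun y => (if y = x then |x| else 0) + if y = -x then |x| else 0) := by
        refine walkSum_congr fun i _ => ?_
        rw [← walkSum_const_mul, ← walkSum_const_mul, ← walkSum_add]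
        refine walkSum_congr fun j _ => ?_
        rw [← sum_abs_sq_sub_sq_neighbours ⟨(i : ℤ) - j, by ring⟩]
        ring
    _ = 4 * walkSqGapSum n + 16 * chooseSqAbsDevSum n := by
        have hdiag : (walkSum n fun x =>
            walkSum n fun y => (if y = x then |x| else 0) + if y = -x then |x| else 0)
              = 2 * chooseSqAbsDevSum n := by
          rw [walkSum, chooseSqAbsDevSum, mul_sum]
          refine sum_congr rfl fun i hi => ?_
          rw [walkSum_ite_eq_add_ite_eq_neg n (Nat.lt_succ_iff.mp (mem_range.mp hi))]
          ring
        rw [walkSum_add, walkSum_const_mul, walkSum_const_mul, hdiag, walkSqGapSum]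
        ring

lemma chooseSqAbsDevSum_eq_two_mul_sum_max (n : ℕ) :
    chooseSqAbsDevSum n
      = 2 * ∑ i ∈ range (n + 1), (n.choose i : ℤ) ^ 2 * max (2 * i - n : ℤ) 0 := by
  have hreflect : ∑ i ∈ range (n + 1), (n.choose i : ℤ) ^ 2 * max (-(2 * i - n : ℤ)) 0
      = ∑ i ∈ range (n + 1), (n.choose i : ℤ) ^ 2 * max (2 * i - n : ℤ) 0 := by
    rw [← sum_range_reflect]
    refine sum_congr rfl fun i hi => ?_
    have := mem_range.mp hi
    rw [Nat.add_sub_cancel, Nat.choose_symm (by omega)]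
    congr 2
    omega
  simp only [chooseSqAbsDevSum, ← max_zero_add_max_neg_zero_eq_abs_self, mul_add, sum_add_distrib,
    hreflect]
  ring

lemma chooseSqAbsDevSum_succ (m : ℕ) :
    chooseSqAbsDevSum (m + 1) = 2 * (m + 1) * (m.choose ((m + 1) / 2) : ℤ) ^ 2 := by
  rw [chooseSqAbsDevSum_eq_two_mul_sum_max]
  set g : ℕ → ℤ := fun i => ((m + 1).choose i : ℤ) ^ 2 * max (2 * i - (m + 1 : ℕ) : ℤ) 0
  set h : ℕ → ℤ := fun j => (m.choose j : ℤ) ^ 2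
  change 2 * ∑ i ∈ range (m + 1 + 1), g i = _
  have hzero : g 0 = 0 := by simp [g]
  have hlow : ∀ i ∈ Ico 0 ((m + 1) / 2), g (i + 1) = 0 := by
    intro i hi
    have := (mem_Ico.mp hi).2
    simp only [g]
    rw [max_eq_right (by omega), mul_zero]
  have hhigh : ∀ i ∈ Ico ((m + 1) / 2) (m + 1), g (i + 1) = -((m + 1) * (h (i + 1) - h i)) := by
    intro i hi
    have := (mem_Ico.mp hi).1
    simp only [g, h]
    rw [max_eq_left (by omega), mul_comm,
      show (2 * (i + 1 : ℕ) - (m + 1 : ℕ) : ℤ) = 2 * i + 1 - m by push_cast; ring,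
      two_mul_add_one_sub_mul_choose_succ_sq]
    ring
  rw [sum_range_succ', hzero, range_eq_Ico,
    ← sum_Ico_consecutive _ (Nat.zero_le _) (by omega : (m + 1) / 2 ≤ m + 1),
    sum_congr rfl hlow, sum_congr rfl hhigh, sum_const_zero, sum_neg_distrib, ← mul_sum,
    sum_Ico_sub _ (by omega)]
  simp only [h, Nat.choose_succ_self]
  ring

lemma chooseSqAbsDevSum_two_mul (m : ℕ) :
    chooseSqAbsDevSum (2 * m) = m * (m.centralBinom : ℤ) ^ 2 := by
  rcases m with _ | j
  · simp [chooseSqAbsDevSum]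
  have hhalf : (j + 1).centralBinom = 2 * (2 * j + 1).choose (j + 1) := by
    rw [Nat.centralBinom_eq_two_mul_choose, show 2 * (j + 1) = 2 * j + 1 + 1 by ring,
      Nat.choose_succ_succ, Nat.choose_symm_half]
    ring
  rw [show 2 * (j + 1) = 2 * j + 1 + 1 by ring, chooseSqAbsDevSum_succ,
    show (2 * j + 1 + 1) / 2 = j + 1 by omega, hhalf]
  push_cast
  ring

lemma chooseSqAbsDevSum_two_mul_add_one (m : ℕ) :
    chooseSqAbsDevSum (2 * m + 1) = 2 * (2 * m + 1) * (m.centralBinom : ℤ) ^ 2 := by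
  rw [chooseSqAbsDevSum_succ, show (2 * m + 1) / 2 = m by omega,
    Nat.centralBinom_eq_two_mul_choose]
  push_cast
  ring

lemma walkSqGapSum_two_mul (m : ℕ) :
    walkSqGapSum (2 * m) = 8 * m ^ 2 * (m.centralBinom : ℤ) ^ 2 := by
  induction m with
  | zero => simp [walkSqGapSum, walkSum]
  | succ m ih =>
    have hstep : ((m + 1 : ℕ) : ℤ) * (m + 1).centralBinom
        = 2 * (2 * m + 1) * m.centralBinom := by
      exact_mod_cast Nat.succ_mul_centralBinom_succ m
    rw [show 2 * (m + 1) = 2 * m + 1 + 1 by ring, walkSqGapSum_succ, walkSqGapSum_succ, ih,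
      chooseSqAbsDevSum_two_mul, chooseSqAbsDevSum_two_mul_add_one]
    push_cast at hstep ⊢
    linear_combination
      (-8 * (((m : ℤ) + 1) * (m + 1).centralBinom + 2 * (2 * m + 1) * m.centralBinom)) * hstep

lemma walkSqGapSum_two_mul_eq (k : ℕ) :
    walkSqGapSum (2 * k) = 4 * ∑ p ∈ Icc (-(k : ℤ)) k, ∑ q ∈ Icc (-(k : ℤ)) k,
      ((2 * k).choose (k + p).toNat : ℤ) * ((2 * k).choose (k + q).toNat : ℤ)
        * |p ^ 2 - q ^ 2| := by
  simp only [sum_Icc_neg_eq_sum_range, walkSqGapSum, walkSum, mul_sum]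
  refine sum_congr rfl fun i _ => sum_congr rfl fun j _ => ?_
  rw [show ((k : ℤ) + (i - k)).toNat = i by omega, show ((k : ℤ) + (j - k)).toNat = j by omega,
    show (2 * i - (2 * k : ℕ) : ℤ) ^ 2 - (2 * j - (2 * k : ℕ)) ^ 2
      = 4 * ((i - k) ^ 2 - (j - k) ^ 2) by push_cast; ring, abs_mul, abs_of_pos four_pos]
  ring

theorem stmt_8_general (k : ℕ) :
    ∑ p ∈ Finset.Icc (-(k : ℤ)) k, ∑ q ∈ Finset.Icc (-(k : ℤ)) k,
        (Nat.choose (2 * k) ((k + p).toNat) : ℤ) *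
          (Nat.choose (2 * k) ((k + q).toNat) : ℤ) * |p ^ 2 - q ^ 2|
      = 2 * (k : ℤ) ^ 2 * (Nat.choose (2 * k) k : ℤ) ^ 2 := by
  have h := walkSqGapSum_two_mul k
  rw [walkSqGapSum_two_mul_eq, Nat.centralBinom_eq_two_mul_choose] at h
  linarith

theorem stmt_8 (k : ℕ) (hk : 0 < k) :
    ∑ p ∈ Finset.Icc (-(k : ℤ)) k, ∑ q ∈ Finset.Icc (-(k : ℤ)) k,
        (Nat.choose (2 * k) ((k + p).toNat) : ℤ) *
          (Nat.choose (2 * k) ((k + q).toNat) : ℤ) * |p ^ 2 - q ^ 2|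
      = 2 * (k : ℤ) ^ 2 * (Nat.choose (2 * k) k : ℤ) ^ 2 :=
  stmt_8_general k
end

section
/- Let A be an h×h Hadamard matrix with h ≥ 4, and let B be a uniformly random h-column vector with entries in {-1,+1}. Let c ∈ {-1,+1}^h be defined by c_ℓ = sgn((AᵀB)_ℓ) where sgn(x) = 1 if x ≥ 0, -1 if x < 0. Then E[(1/h)·cᵀ·Aᵀ·B] = (h/2^h)·binom(h, h/2). -/
open Matrix Finset

private lemma succ_mul_choose' (n k : ℕ) :
    (k + 1) * Nat.choose (n + 1) (k + 1) = (n + 1) * Nat.choose n k := by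
  simpa [Nat.succ_eq_add_one, mul_comm] using (Nat.add_one_mul_choose_eq n k).symm

private lemma sub_mul_choose (n k : ℕ) :
    (n - k) * Nat.choose n k = n * Nat.choose (n - 1) k := by
  cases n with
  | zero => simp
  | succ n =>
    rcases Nat.lt_or_ge k (n + 1) with hk' | hk'
    · have hkn : k ≤ n := Nat.lt_succ_iff.mp hk'
      have h1 : Nat.choose (n + 1) k = Nat.choose (n + 1) (n + 1 - k) := by
        rw [Nat.choose_symm (by omega)]
      have h2 : n + 1 - k = (n - k) + 1 := by omega
      rw [h1, h2, succ_mul_choose' n (n - k), Nat.choose_symm hkn]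
      simp
    · rcases Nat.eq_or_lt_of_le hk' with hk | hk
      · rw [← hk]; simp [Nat.choose_succ_self]
      · rw [Nat.choose_eq_zero_of_lt hk, Nat.choose_eq_zero_of_lt (by omega)]
        simp

private lemma key_identity (m : ℕ) (hm : 1 ≤ m) :
    ∑ k ∈ Finset.range (2 * m + 1), (Nat.choose (2 * m) k : ℝ) * |2 * (k : ℝ) - 2 * m| =
      2 * m * (Nat.choose (2 * m) m : ℝ) := by
  have hsplit := Finset.sum_Ico_consecutive
      (fun k => (Nat.choose (2 * m) k : ℝ) * |2 * (k : ℝ) - 2 * m|)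
      (show 0 ≤ m + 1 by omega) (show m + 1 ≤ 2 * m + 1 by omega)
  rw [Finset.range_eq_Ico, ← hsplit]
  have hS1 : ∑ k ∈ Finset.Ico 0 (m + 1),
      (Nat.choose (2 * m) k : ℝ) * |2 * (k : ℝ) - 2 * m| =
      2 * m * (Nat.choose (2 * m - 1) m : ℝ) := by
    rw [← Finset.range_eq_Ico]
    have habs : ∀ k ∈ Finset.range (m + 1),
        (Nat.choose (2 * m) k : ℝ) * |2 * (k : ℝ) - 2 * m| =
        (((2 * m - k) * Nat.choose (2 * m) k : ℕ) : ℝ) -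
          ((k * Nat.choose (2 * m) k : ℕ) : ℝ) := by
      intro k hk
      rw [Finset.mem_range] at hk
      have hk2 : k ≤ 2 * m := by omega
      rw [abs_of_nonpos (by
        have hkm : (k : ℝ) ≤ (m : ℝ) := by exact_mod_cast (show k ≤ m by omega)
        linarith)]
      push_cast [Nat.cast_sub hk2]
      ring
    rw [Finset.sum_congr rfl habs, Finset.sum_sub_distrib]
    have h1 : ∑ k ∈ Finset.range (m + 1),
        (((2 * m - k) * Nat.choose (2 * m) k : ℕ) : ℝ) =
        ∑ k ∈ Finset.range (m + 1), 2 * m * (Nat.choose (2 * m - 1) k : ℝ) := by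
      refine Finset.sum_congr rfl fun k _ => ?_
      rw [sub_mul_choose (2 * m) k]; push_cast; ring
    have h2 : ∑ k ∈ Finset.range (m + 1),
        ((k * Nat.choose (2 * m) k : ℕ) : ℝ) =
        ∑ k ∈ Finset.range m, 2 * m * (Nat.choose (2 * m - 1) k : ℝ) := by
      rw [Finset.sum_range_succ' (fun k => ((k * Nat.choose (2 * m) k : ℕ) : ℝ)) m]
      simp only [Nat.zero_mul, Nat.cast_zero, add_zero]
      refine Finset.sum_congr rfl fun k _ => ?_
      have e : (k + 1) * Nat.choose (2 * m) (k + 1) = 2 * m * Nat.choose (2 * m - 1) k := by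
        have := succ_mul_choose' (2 * m - 1) k
        rwa [show 2 * m - 1 + 1 = 2 * m from by omega] at this
      rw [e]
      push_cast
      ring
    rw [h1, h2, Finset.sum_range_succ]
    ring
  have hS2 : ∑ k ∈ Finset.Ico (m + 1) (2 * m + 1),
      (Nat.choose (2 * m) k : ℝ) * |2 * (k : ℝ) - 2 * m| =
      2 * m * (Nat.choose (2 * m - 1) m : ℝ) := by
    have habs : ∀ k ∈ Finset.Ico (m + 1) (2 * m + 1),
        (Nat.choose (2 * m) k : ℝ) * |2 * (k : ℝ) - 2 * m| =
        2 * m * ((Nat.choose (2 * m - 1) (k - 1) : ℝ) - (Nat.choose (2 * m - 1) k : ℝ)) := by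
      intro k hk
      rw [Finset.mem_Ico] at hk
      obtain ⟨hk1, hk2⟩ := hk
      have hk2' : k ≤ 2 * m := by omega
      rw [abs_of_nonneg (by
        have hkm : (m : ℝ) ≤ (k : ℝ) := by exact_mod_cast (show m ≤ k by omega)
        linarith)]
      have e1 : k * Nat.choose (2 * m) k = 2 * m * Nat.choose (2 * m - 1) (k - 1) := by
        have hk' : k = (k - 1) + 1 := by omega
        have h2m : 2 * m = (2 * m - 1) + 1 := by omega
        calc k * Nat.choose (2 * m) k
            = ((k - 1) + 1) * Nat.choose ((2 * m - 1) + 1) ((k - 1) + 1) := by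
              rw [← hk', ← h2m]
          _ = ((2 * m - 1) + 1) * Nat.choose (2 * m - 1) (k - 1) :=
              succ_mul_choose' (2 * m - 1) (k - 1)
          _ = 2 * m * Nat.choose (2 * m - 1) (k - 1) := by rw [← h2m]
      have e2 : (2 * m - k) * Nat.choose (2 * m) k = 2 * m * Nat.choose (2 * m - 1) k :=
        sub_mul_choose (2 * m) k
      have e3 : (Nat.choose (2 * m) k : ℝ) * (2 * (k : ℝ) - 2 * m) =
          ((k * Nat.choose (2 * m) k : ℕ) : ℝ) -
            (((2 * m - k) * Nat.choose (2 * m) k : ℕ) : ℝ) := by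
        push_cast [Nat.cast_sub hk2']
        ring
      rw [e3, e1, e2]
      push_cast
      ring
    rw [Finset.sum_congr rfl habs]
    rw [Finset.sum_Ico_eq_sum_range]
    have hrange : 2 * m + 1 - (m + 1) = m := by omega
    rw [hrange]
    have hterm : ∀ j ∈ Finset.range m,
        2 * m * ((Nat.choose (2 * m - 1) (m + 1 + j - 1) : ℝ) -
          (Nat.choose (2 * m - 1) (m + 1 + j) : ℝ)) =
        (fun j => 2 * m * (Nat.choose (2 * m - 1) (m + j) : ℝ)) j -
          (fun j => 2 * m * (Nat.choose (2 * m - 1) (m + j) : ℝ)) (j + 1) := by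
      intro j _
      simp only
      have : m + 1 + j - 1 = m + j := by omega
      have h2 : m + 1 + j = m + (j + 1) := by omega
      rw [this, h2]
      ring
    rw [Finset.sum_congr rfl hterm, Finset.sum_range_sub']
    simp only [add_zero]
    rw [Nat.choose_eq_zero_of_lt (show 2 * m - 1 < m + m by omega)]
    simp
  rw [hS1, hS2]
  have hpas : (Nat.choose (2 * m) m : ℝ) = 2 * (Nat.choose (2 * m - 1) m : ℝ) := by
    have h2m : 2 * m = (2 * m - 1) + 1 := by omega
    have hm' : m = (m - 1) + 1 := by omega
    have : Nat.choose (2 * m) m = Nat.choose (2 * m - 1) (m - 1) + Nat.choose (2 * m - 1) m := by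
      calc Nat.choose (2 * m) m
          = Nat.choose ((2 * m - 1) + 1) ((m - 1) + 1) := by rw [← h2m, ← hm']
        _ = Nat.choose (2 * m - 1) (m - 1) + Nat.choose (2 * m - 1) ((m - 1) + 1) :=
            Nat.choose_succ_succ _ _
        _ = Nat.choose (2 * m - 1) (m - 1) + Nat.choose (2 * m - 1) m := by rw [← hm']
    have hsymm : Nat.choose (2 * m - 1) (m - 1) = Nat.choose (2 * m - 1) m := by
      have := Nat.choose_symm (show m - 1 ≤ 2 * m - 1 by omega)
      rw [show 2 * m - 1 - (m - 1) = m by omega] at this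
      exact this.symm
    rw [this, hsymm]
    push_cast
    ring
  rw [hpas]
  ring

private def boolFinsetEquiv (n : ℕ) : (Fin n → Bool) ≃ Finset (Fin n) where
  toFun b := Finset.univ.filter (fun i => b i = true)
  invFun s := fun i => decide (i ∈ s)
  left_inv b := by funext i; simp
  right_inv s := by ext i; simp

private lemma sum_abs_signs (n : ℕ) :
    ∑ b : Fin n → Bool, |∑ i : Fin n, (if b i then (1 : ℝ) else -1)| =
      ∑ k ∈ Finset.range (n + 1), (Nat.choose n k : ℝ) * |2 * (k : ℝ) - n| := by
  have hsum : ∀ b : Fin n → Bool,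
      ∑ i : Fin n, (if b i then (1 : ℝ) else -1) =
      2 * ((Finset.univ.filter (fun i => b i = true)).card : ℝ) - n := by
    intro b
    have hterm : ∀ i : Fin n, (if b i then (1 : ℝ) else -1) =
        2 * (if b i = true then (1 : ℝ) else 0) - 1 := by
      intro i; by_cases hb : b i <;> norm_num [hb]
    rw [Finset.sum_congr rfl fun i _ => hterm i, Finset.sum_sub_distrib, ← Finset.mul_sum,
      Finset.sum_boole]
    simp
  simp only [hsum]
  have := Equiv.sum_comp (boolFinsetEquiv n)
    (fun s : Finset (Fin n) => |2 * (s.card : ℝ) - n|)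
  simp only [boolFinsetEquiv, Equiv.coe_fn_mk] at this
  rw [this]
  rw [← Finset.powerset_univ, Finset.sum_powerset]
  rw [Finset.card_univ, Fintype.card_fin]
  refine Finset.sum_congr rfl fun k hk => ?_
  have hconst : ∀ t ∈ Finset.powersetCard k (Finset.univ : Finset (Fin n)),
      |2 * ((t.card : ℝ)) - n| = |2 * (k : ℝ) - n| := by
    intro t ht
    rw [(Finset.mem_powersetCard.mp ht).2]
  rw [Finset.sum_congr rfl hconst, Finset.sum_const, Finset.card_powersetCard,
    Finset.card_univ, Fintype.card_fin, nsmul_eq_mul]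

theorem stmt_11 (h : ℕ) (hh : 4 ≤ h) (hdvd : 4 ∣ h)
    (A : Matrix (Fin h) (Fin h) ℝ) (hA : ∀ i j, A i j = 1 ∨ A i j = -1)
    (hHad : A * Aᵀ = (h : ℝ) • 1) :
    (∑ b : Fin h → Bool,
        (1 / (h : ℝ)) * ∑ ℓ : Fin h,
          (if 0 ≤ Aᵀ.mulVec (fun i => if b i then (1 : ℝ) else -1) ℓ then (1 : ℝ) else -1) *
            Aᵀ.mulVec (fun i => if b i then (1 : ℝ) else -1) ℓ) / 2 ^ h
      = ((h : ℝ) / 2 ^ h) * (Nat.choose h (h / 2) : ℝ) := by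
  classical
  have hhpos : (0 : ℝ) < h := by exact_mod_cast (by omega : 0 < h)
  have habs : ∀ x : ℝ, (if 0 ≤ x then (1 : ℝ) else -1) * x = |x| := by
    intro x
    by_cases hx : 0 ≤ x
    · simp [hx, abs_of_nonneg hx]
    · simp [hx, abs_of_neg (lt_of_not_ge hx)]
  simp only [habs]
  -- per ℓ, the inner sum over b equals the sum of abs of plain sign sums
  have keyl : ∀ ℓ : Fin h,
      ∑ b : Fin h → Bool, |Aᵀ.mulVec (fun i => if b i then (1 : ℝ) else -1) ℓ| =
      ∑ b : Fin h → Bool, |∑ i : Fin h, (if b i then (1 : ℝ) else -1)| := by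
    intro ℓ
    have hinv : Function.Involutive
        (fun (b : Fin h → Bool) => fun i => if A i ℓ = -1 then !(b i) else b i) := by
      intro b; funext i; by_cases hAi : A i ℓ = -1 <;> simp [hAi]
    set e := hinv.toPerm with he
    have hcomp : ∀ b : Fin h → Bool,
        |∑ i : Fin h, (if (e b) i then (1 : ℝ) else -1)| =
        |Aᵀ.mulVec (fun i => if b i then (1 : ℝ) else -1) ℓ| := by
      intro b
      have hmv : Aᵀ.mulVec (fun i => if b i then (1 : ℝ) else -1) ℓ =
          ∑ i : Fin h, A i ℓ * (if b i then (1 : ℝ) else -1) := by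
        simp [Matrix.mulVec, dotProduct, Matrix.transpose_apply]
      rw [hmv]
      congr 1
      refine Finset.sum_congr rfl fun i _ => ?_
      have heb : (e b) i = if A i ℓ = -1 then !(b i) else b i := rfl
      rcases hA i ℓ with h1 | h1
      · have hne : ¬ (A i ℓ = -1) := by rw [h1]; norm_num
        rw [heb, if_neg hne, h1, one_mul]
      · rw [heb, if_pos h1, h1]
        by_cases hb : b i <;> simp [hb]
    calc ∑ b : Fin h → Bool, |Aᵀ.mulVec (fun i => if b i then (1 : ℝ) else -1) ℓ|
        = ∑ b : Fin h → Bool, |∑ i : Fin h, (if (e b) i then (1 : ℝ) else -1)| := by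
          exact (Finset.sum_congr rfl fun b _ => (hcomp b).symm)
      _ = ∑ b : Fin h → Bool, |∑ i : Fin h, (if b i then (1 : ℝ) else -1)| :=
          Equiv.sum_comp e (fun b => |∑ i : Fin h, (if b i then (1 : ℝ) else -1)|)
  -- swap sums
  have hswap : ∑ b : Fin h → Bool,
      (1 / (h : ℝ)) * ∑ ℓ : Fin h,
        |Aᵀ.mulVec (fun i => if b i then (1 : ℝ) else -1) ℓ| =
      (1 / (h : ℝ)) * ∑ ℓ : Fin h, ∑ b : Fin h → Bool,
        |Aᵀ.mulVec (fun i => if b i then (1 : ℝ) else -1) ℓ| := by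
    rw [← Finset.mul_sum, Finset.sum_comm]
  rw [hswap]
  have hconst : ∑ ℓ : Fin h, ∑ b : Fin h → Bool,
      |Aᵀ.mulVec (fun i => if b i then (1 : ℝ) else -1) ℓ| =
      (h : ℝ) * ∑ b : Fin h → Bool, |∑ i : Fin h, (if b i then (1 : ℝ) else -1)| := by
    rw [Finset.sum_congr rfl fun ℓ _ => keyl ℓ, Finset.sum_const, Finset.card_univ,
      Fintype.card_fin, nsmul_eq_mul]
  rw [hconst, ← mul_assoc, one_div, inv_mul_cancel₀ (ne_of_gt hhpos), one_mul]
  -- now apply the combinatorial evaluation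
  obtain ⟨m, hm⟩ : ∃ m, h = 2 * m := ⟨h / 2, by omega⟩
  have hm1 : 1 ≤ m := by omega
  have hhalf : h / 2 = m := by omega
  rw [sum_abs_signs h, hhalf]
  subst hm
  push_cast
  rw [key_identity m hm1]
  ring
end

section
/- For real numbers d ≥ 1, h ≥ 4, and μ satisfying sqrt(2h/π) + 0.9 < μ < sqrt(2h/π) + 1, the inequality (1 - d²/(2h))·(1 - d²/μ) ≥ 1 - d²/(sqrt(2/π)·sqrt(h)) holds. -/
theorem stmt_16 (d h μ : ℝ) (hd : 1 ≤ d) (hh : 4 ≤ h)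
    (hμl : Real.sqrt (2 * h / Real.pi) + 0.9 < μ)
    (hμu : μ < Real.sqrt (2 * h / Real.pi) + 1) :
    (1 - d ^ 2 / (2 * h)) * (1 - d ^ 2 / μ) ≥
      1 - d ^ 2 / (Real.sqrt (2 / Real.pi) * Real.sqrt h) := by
  have hπ := Real.pi_gt_d6
  have hπ0 : 0 < Real.pi := Real.pi_pos
  set s := Real.sqrt (2 * h / Real.pi) with hs
  have hh0 : (0:ℝ) < h := by linarith
  have hs2 : s ^ 2 = 2 * h / Real.pi := Real.sq_sqrt (by positivity)
  have hs0 : 0 < s := Real.sqrt_pos.mpr (by positivity)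
  have hrw : Real.sqrt (2 / Real.pi) * Real.sqrt h = s := by
    rw [hs, ← Real.sqrt_mul (by positivity)]
    ring_nf
  have hμ0 : 0 < μ := by linarith
  have h2h : Real.pi * s ^ 2 = 2 * h := by
    rw [hs2]; field_simp
  have key : 2 * h * (μ - s) ≥ s * (μ - 1) := by
    nlinarith [sq_nonneg s, mul_pos hs0 hs0]
  rw [hrw, ge_iff_le, ← sub_nonneg]
  have hd2 : 1 ≤ d ^ 2 := by nlinarith
  have expand : (1 - d ^ 2 / (2 * h)) * (1 - d ^ 2 / μ) - (1 - d ^ 2 / s)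
      = d ^ 2 * ((2 * h * (μ - s) - s * (μ - 1)) + s * (d ^ 2 - 1)) / (2 * h * μ * s) := by
    field_simp
    ring
  rw [expand]
  apply div_nonneg
  · apply mul_nonneg (sq_nonneg d)
    nlinarith
  · positivity
end

section
/- Let h ≥ 4 be a multiple of 4 and μ = 1 + (h/2^h)·binom(h, h/2). Suppose there exists a {±1}-matrix of order n = h + 2 with determinant at least h^{h/2}·(μ² - 1). Then h^{h/2}·(μ² - 1)/n^{n/2} > 2/(π·e). -/
open Real

lemma central_binom_sq_bound (m : ℕ) :
    2 / π ≤ ((Nat.choose (2*m) m : ℝ) / 4 ^ m) ^ 2 * (2*(m:ℝ)+1) := by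
  have hW := Real.Wallis.W_le m
  rw [Real.Wallis.W_eq_factorial_ratio] at hW
  have hfact : ((2*m).factorial : ℝ) = (Nat.choose (2*m) m : ℝ) * m.factorial * m.factorial := by
    have := Nat.choose_mul_factorial_mul_factorial (Nat.le_mul_of_pos_left m (by norm_num : 0 < 2))
    have h2 : 2*m - m = m := by omega
    rw [h2] at this
    exact_mod_cast this.symm
  have hc : (0:ℝ) < (Nat.choose (2*m) m : ℝ) := by
    exact_mod_cast Nat.choose_pos (Nat.le_mul_of_pos_left m (by norm_num : 0 < 2))
  have hf : (0:ℝ) < (m.factorial : ℝ) := by exact_mod_cast m.factorial_pos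
  have hπ := Real.pi_pos
  have hK : (0:ℝ) < 2*(m:ℝ)+1 := by positivity
  rw [hfact] at hW
  rw [div_le_div_iff₀ (by positivity) (by norm_num)] at hW
  rw [div_le_iff₀ hπ, div_pow, div_mul_eq_mul_div, div_mul_eq_mul_div,
      le_div_iff₀ (by positivity)]
  have h4 : ((4:ℝ)^m)^2 = 2^(4*m) := by
    rw [← pow_mul, show (4:ℝ) = 2^2 by norm_num, ← pow_mul]; ring_nf
  rw [h4]
  nlinarith [sq_nonneg ((m.factorial:ℝ)^2), pow_pos hf 4, mul_pos (mul_pos hc hf) hf]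

set_option maxHeartbeats 1000000 in
theorem stmt_18 (h n : ℕ) (hh : 4 ≤ h) (hdvd : 4 ∣ h) (hn : n = h + 2)
    (μ : ℝ) (hμ : μ = 1 + ((h : ℝ) / 2 ^ h) * (Nat.choose h (h / 2) : ℝ))
    (hex : ∃ M : Matrix (Fin n) (Fin n) ℝ, (∀ i j, M i j = 1 ∨ M i j = -1) ∧
      M.det ≥ (h : ℝ) ^ ((h : ℝ) / 2) * (μ ^ 2 - 1)) :
    (h : ℝ) ^ ((h : ℝ) / 2) * (μ ^ 2 - 1) / (n : ℝ) ^ ((n : ℝ) / 2)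
      > 2 / (Real.pi * Real.exp 1) := by
  clear hex
  obtain ⟨m, hhm⟩ : ∃ m, h = 2 * m := ⟨2 * (h/4), by omega⟩
  have hhalf : h / 2 = m := by omega
  have hπ := Real.pi_pos
  have hπ3 := Real.pi_gt_three
  have hπ4 := Real.pi_lt_d2
  have hh4 : (4:ℝ) ≤ (h:ℝ) := by exact_mod_cast hh
  have hhpos : (0:ℝ) < (h:ℝ) := by linarith
  -- the key binomial bound
  have hbin := central_binom_sq_bound m
  rw [← hhm, ← hhalf] at hbin
  have hcast : 2*((h/2 : ℕ):ℝ)+1 = (h:ℝ)+1 := by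
    rw [hhalf, hhm]; push_cast; ring
  rw [hcast] at hbin
  have h4pow : ((4:ℝ))^(h/2) = 2^h := by
    rw [hhalf, hhm, pow_mul]; norm_num
  rw [h4pow] at hbin
  set P : ℝ := (Nat.choose h (h/2) : ℝ) / 2^h with hPdef
  have hPpos : 0 < P := by
    apply div_pos _ (by positivity)
    exact_mod_cast Nat.choose_pos (Nat.div_le_self h 2)
  set a : ℝ := (h:ℝ) * P with hadef
  have hapos : 0 < a := by positivity
  have hμa : μ = 1 + a := by rw [hμ, hadef, hPdef]; ring
  have hμsq : μ^2 - 1 = a^2 + 2*a := by rw [hμa]; ring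
  have hp1 : (0:ℝ) < π * ((h:ℝ)+1) := by positivity
  -- a^2 ≥ 2*h^2/(π*(h+1))
  have ha2 : a^2 * (π * ((h:ℝ)+1)) ≥ 2 * (h:ℝ)^2 := by
    have h1 : 2/π ≤ P^2 * ((h:ℝ)+1) := hbin
    rw [div_le_iff₀ hπ] at h1
    have : a^2 = (h:ℝ)^2 * P^2 := by rw [hadef]; ring
    rw [this]
    nlinarith [sq_nonneg (h:ℝ)]
  -- step 1 : π * (μ^2 - 1) ≥ 2*h + 4
  have hstep1 : π * (μ^2 - 1) ≥ 2*(h:ℝ) + 4 := by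
    rw [hμsq]
    have hpa2 : π * a^2 ≥ 2*(h:ℝ) - 2 := by
      nlinarith [sq_nonneg ((h:ℝ) - 1)]
    have hhsq : (h:ℝ)^2 ≥ π * ((h:ℝ)+1) := by nlinarith
    have ha2ge2 : a^2 ≥ 2 := by
      have h2 : 2 * (π * ((h:ℝ)+1)) ≤ a^2 * (π * ((h:ℝ)+1)) := by linarith
      exact le_of_mul_le_mul_right h2 hp1
    have hage : a ≥ 1 := by nlinarith [mul_pos hapos hapos]
    have hpa : 3 * 1 ≤ π * a := mul_le_mul hπ3.le hage (by norm_num) hπ.le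
    linarith
  -- step 2 : n^{n/2} < e * (h+2) * h^{h/2}
  have hhrpos : (0:ℝ) < (h:ℝ)^((h:ℝ)/2) := rpow_pos_of_pos hhpos _
  have hncast : (n:ℝ) = (h:ℝ) + 2 := by rw [hn]; push_cast; ring
  have hnpos : (0:ℝ) < (h:ℝ) + 2 := by linarith
  have hstep2 : (n:ℝ)^((n:ℝ)/2) < Real.exp 1 * ((h:ℝ)+2) * (h:ℝ)^((h:ℝ)/2) := by
    rw [hncast]
    have hsplit : ((h:ℝ)+2)^(((h:ℝ)+2)/2) = ((h:ℝ)+2)^((h:ℝ)/2) * ((h:ℝ)+2) := by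
      rw [show ((h:ℝ)+2)/2 = (h:ℝ)/2 + 1 by ring, rpow_add hnpos, rpow_one]
    rw [hsplit]
    have hfac : ((h:ℝ)+2)^((h:ℝ)/2) < (h:ℝ)^((h:ℝ)/2) * Real.exp 1 := by
      have h2hpos : (0:ℝ) < 2/(h:ℝ) := by positivity
      have hxpos : (0:ℝ) < 1 + 2/(h:ℝ) := by positivity
      have heq : (h:ℝ)+2 = (h:ℝ) * (1 + 2/(h:ℝ)) := by field_simp
      rw [heq, mul_rpow hhpos.le hxpos.le]
      apply mul_lt_mul_of_pos_left _ hhrpos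
      rw [rpow_def_of_pos hxpos]
      apply Real.exp_lt_exp.mpr
      have hlog : Real.log (1 + 2/(h:ℝ)) < 2/(h:ℝ) := by
        have hne : (1 + 2/(h:ℝ)) ≠ 1 := by
          exact (lt_add_of_pos_right 1 h2hpos).ne'
        have := Real.log_lt_sub_one_of_pos hxpos hne
        linarith
      calc Real.log (1 + 2/(h:ℝ)) * ((h:ℝ)/2) < (2/(h:ℝ)) * ((h:ℝ)/2) := by
            apply mul_lt_mul_of_pos_right hlog (by positivity)
        _ = 1 := by field_simp
    nlinarith
  -- finish
  have hNpos : (0:ℝ) < (n:ℝ)^((n:ℝ)/2) := by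
    rw [hncast]; exact rpow_pos_of_pos hnpos _
  rw [gt_iff_lt, div_lt_div_iff₀ (by positivity) hNpos]
  have hepos := Real.exp_pos 1
  have hmul := mul_le_mul_of_nonneg_left hstep1 (mul_pos hhrpos hepos).le
  calc 2 * (n:ℝ)^((n:ℝ)/2) < 2 * (Real.exp 1 * ((h:ℝ)+2) * (h:ℝ)^((h:ℝ)/2)) := by linarith
    _ ≤ (h:ℝ)^((h:ℝ)/2) * (μ^2-1) * (π * Real.exp 1) := by nlinarith [hmul]
end

section
/- For positive integers m, with k = 2 terms in Stirling's expansion: binom(2m, m) = (4^m/sqrt(π·m))·exp(-1/(8m) + θ/(180·m³)) for some θ with |θ| < 1. -/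
/-!
Write `n! = √(2πn) (n/e)^n e^{ε n}`. Then
`(2m choose m) = (2m)!/(m!)² = 4^m/√(πm) · e^{ε(2m) - 2ε(m)}`,
so it suffices to know `1/(12n) - 1/(360n³) < ε n ≤ 1/(12n)`: these bounds put
`ε(2m) - 2ε(m) + 1/(8m)` between `-1/(2880m³)` and `1/(180m³)`.
Both bounds on `ε` follow by telescoping from `ε n → 0` and from bounds on the increments
`ε n - ε (n+1)`: Robbins' geometric-series bound from above, and from below the first two terms of
the series expansion of the increment, which exceed the increment of `1/(12x) - 1/(360x³)`.
-/

open Real Filter Topology Nat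

theorem le_of_tendsto_of_sub_succ_le {a b : ℕ → ℝ} {L : ℝ} (ha : Tendsto a atTop (𝓝 L))
    (hb : Tendsto b atTop (𝓝 L)) (h : ∀ n, a n - a (n + 1) ≤ b n - b (n + 1)) (n : ℕ) :
    a n ≤ b n := by
  have hanti : Antitone fun k => b k - a k :=
    antitone_nat_of_succ_le fun k => by linarith [h k]
  have hlim : Tendsto (fun k => b k - a k) atTop (𝓝 0) := by
    simpa only [sub_self] using hb.sub ha
  linarith [hanti.le_of_tendsto hlim n]

theorem lt_of_tendsto_of_sub_succ_lt {a b : ℕ → ℝ} {L : ℝ} (ha : Tendsto a atTop (𝓝 L))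
    (hb : Tendsto b atTop (𝓝 L)) (h : ∀ n, a n - a (n + 1) < b n - b (n + 1)) (n : ℕ) :
    a n < b n := by
  linarith [h n, le_of_tendsto_of_sub_succ_le ha hb (fun k => (h k).le) (n + 1)]

theorem tendsto_one_div_mul_pow_atTop {c : ℝ} (hc : 0 < c) {p : ℕ} (hp : p ≠ 0) :
    Tendsto (fun x : ℝ => 1 / (c * x ^ p)) atTop (𝓝 0) :=
  tendsto_const_nhds.div_atTop ((tendsto_pow_atTop hp).const_mul_atTop hc)

namespace Stirling

noncomputable def stirlingError (n : ℕ) : ℝ := log (stirlingSeq n) - log √π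

theorem tendsto_stirlingError : Tendsto stirlingError atTop (𝓝 0) := by
  have h := ((continuousAt_log (sqrt_pos.2 pi_pos).ne').tendsto.comp
    tendsto_stirlingSeq_sqrt_pi).sub_const (log √π)
  rwa [sub_self] at h

theorem factorial_eq_stirlingError {n : ℕ} (hn : n ≠ 0) :
    (n ! : ℝ) = √(2 * π * n) * (n / exp 1) ^ n * exp (stirlingError n) := by
  have hs : 0 < stirlingSeq n := (sqrt_pos.2 pi_pos).trans_le (sqrt_pi_le_stirlingSeq hn)
  rw [stirlingError, exp_sub, exp_log hs, exp_log (sqrt_pos.2 pi_pos), stirlingSeq,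
    show (2 : ℝ) * π * n = π * (2 * n) by ring, sqrt_mul pi_pos.le]
  field_simp

theorem stirlingError_le {n : ℕ} (hn : n ≠ 0) : stirlingError n ≤ 1 / (12 * n) := by
  obtain ⟨n, rfl⟩ := exists_eq_add_one_of_ne_zero hn
  have hlim : Tendsto (fun k : ℕ => 1 / (12 * ((k + 1 : ℕ) : ℝ))) atTop (𝓝 0) := by
    simpa only [pow_one, Function.comp_def] using
      (tendsto_one_div_mul_pow_atTop (by norm_num : (0 : ℝ) < 12) one_ne_zero).comp
        (tendsto_natCast_atTop_atTop.comp (tendsto_add_atTop_nat 1))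
  refine le_of_tendsto_of_sub_succ_le (a := fun k => stirlingError (k + 1))
    (tendsto_stirlingError.comp (tendsto_add_atTop_nat 1)) hlim (fun k => ?_) n
  have h := log_stirlingSeq_sdiff_le (k + 1)
  simp only [stirlingError, sub_sub_sub_cancel_right]
  refine h.trans_eq ?_
  push_cast
  field_simp
  ring

noncomputable def stirlingLower (x : ℝ) : ℝ := 1 / (12 * x) - 1 / (360 * x ^ 3)

theorem tendsto_stirlingLower_atTop : Tendsto stirlingLower atTop (𝓝 0) := by
  show Tendsto (fun x => 1 / (12 * x) - 1 / (360 * x ^ 3)) atTop (𝓝 0)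
  simpa only [pow_one, sub_zero] using
    (tendsto_one_div_mul_pow_atTop (by norm_num : (0 : ℝ) < 12) one_ne_zero).sub
      (tendsto_one_div_mul_pow_atTop (by norm_num : (0 : ℝ) < 360) three_ne_zero)

-- The right-hand side is the sum of the first two terms of `log_stirlingSeq_sdiff_hasSum`
-- at `x = n + 1`.
theorem stirlingLower_sub_succ_lt {x : ℝ} (hx : 0 < x) :
    stirlingLower x - stirlingLower (x + 1) <
      1 / 3 * (1 / (2 * x + 1)) ^ 2 + 1 / 5 * ((1 / (2 * x + 1)) ^ 2) ^ 2 := by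
  rw [← sub_pos]
  have key : 1 / 3 * (1 / (2 * x + 1)) ^ 2 + 1 / 5 * ((1 / (2 * x + 1)) ^ 2) ^ 2 -
      (stirlingLower x - stirlingLower (x + 1)) =
      (10 * x ^ 4 + 20 * x ^ 3 + 21 * x ^ 2 + 11 * x + 1) /
        (360 * x ^ 3 * (x + 1) ^ 3 * (2 * x + 1) ^ 4) := by
    unfold stirlingLower
    field_simp
    ring
  rw [key]
  positivity

theorem stirlingLower_lt_stirlingError {n : ℕ} (hn : n ≠ 0) :
    stirlingLower n < stirlingError n := by
  obtain ⟨n, rfl⟩ := exists_eq_add_one_of_ne_zero hn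
  refine lt_of_tendsto_of_sub_succ_lt (a := fun k : ℕ => stirlingLower ((k + 1 : ℕ) : ℝ))
    (b := fun k => stirlingError (k + 1))
    (tendsto_stirlingLower_atTop.comp (tendsto_natCast_atTop_atTop.comp (tendsto_add_atTop_nat 1)))
    (tendsto_stirlingError.comp (tendsto_add_atTop_nat 1)) (fun k => ?_) n
  have hsum := sum_le_hasSum (Finset.range 2) (fun _ _ => by positivity)
    (log_stirlingSeq_sdiff_hasSum k)
  simp only [stirlingError, sub_sub_sub_cancel_right]
  refine lt_of_lt_of_le ?_ hsum
  rw [Finset.sum_range_succ, Finset.sum_range_one]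
  push_cast
  refine (stirlingLower_sub_succ_lt (x := (k : ℝ) + 1) (by positivity)).trans_le (le_of_eq ?_)
  norm_num

theorem choose_two_mul_self_eq {m : ℕ} (hm : m ≠ 0) :
    (choose (2 * m) m : ℝ) =
      4 ^ m / √(π * m) * exp (stirlingError (2 * m) - 2 * stirlingError m) := by
  have hfac : (choose (2 * m) m : ℝ) * m ! * m ! = (2 * m)! := by
    have h := choose_mul_factorial_mul_factorial (le_add_right m m)
    rw [add_tsub_cancel_left, ← two_mul] at h
    exact_mod_cast h
  have hsqrt : √(2 * π * ((2 * m : ℕ) : ℝ)) = 2 * √(π * m) := by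
    push_cast
    rw [show 2 * π * (2 * (m : ℝ)) = 2 ^ 2 * (π * m) by ring,
      sqrt_mul (by positivity), sqrt_sq zero_le_two]
  have hpow : (((2 * m : ℕ) : ℝ) / exp 1) ^ (2 * m) = 4 ^ m * ((m / exp 1) ^ m) ^ 2 := by
    push_cast
    rw [mul_div_assoc, mul_pow, pow_mul, pow_mul']
    norm_num
  have hsq : √(2 * π * m) ^ 2 = 2 * √(π * m) ^ 2 := by
    rw [sq_sqrt (by positivity), sq_sqrt (by positivity), mul_assoc]
  rw [factorial_eq_stirlingError hm, factorial_eq_stirlingError (by positivity), hsqrt,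
    hpow] at hfac
  have hs : 0 < √(π * m) := sqrt_pos.2 (by positivity)
  rw [two_mul (stirlingError m), exp_sub, exp_add]
  field_simp
  apply mul_left_cancel₀ (show 2 * √(π * m) * ((m / exp 1) ^ m) ^ 2 ≠ 0 by positivity)
  linear_combination hfac - (choose (2 * m) m : ℝ) * ((m / exp 1) ^ m) ^ 2 *
    exp (stirlingError m) ^ 2 * hsq


theorem abs_stirlingError_two_mul_sub_add_lt {m : ℕ} (hm : m ≠ 0) :
    |stirlingError (2 * m) - 2 * stirlingError m + 1 / (8 * m)| < 1 / (180 * (m : ℝ) ^ 3) := by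
  have hx : (0 : ℝ) < m := by positivity
  have h2m : 2 * m ≠ 0 := mul_ne_zero two_ne_zero hm
  have hP := stirlingError_le h2m
  have hP' := stirlingLower_lt_stirlingError h2m
  have hQ := stirlingError_le hm
  have hQ' := stirlingLower_lt_stirlingError hm
  unfold stirlingLower at hP' hQ'
  push_cast at hP hP'
  have hupper : 1 / (12 * (2 * m)) - 2 * (1 / (12 * m) - 1 / (360 * (m : ℝ) ^ 3)) + 1 / (8 * m) =
      1 / (180 * (m : ℝ) ^ 3) := by
    field_simp; ring
  have hlower : 1 / (12 * (2 * m)) - 1 / (360 * (2 * (m : ℝ)) ^ 3) - 2 * (1 / (12 * m)) +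
      1 / (8 * m) = -(1 / (2880 * (m : ℝ) ^ 3)) := by
    field_simp; ring
  have hcmp : 1 / (2880 * (m : ℝ) ^ 3) < 1 / (180 * (m : ℝ) ^ 3) :=
    one_div_lt_one_div_of_lt (by positivity) (by linarith [pow_pos hx 3])
  rw [abs_lt]
  constructor <;> linarith

end Stirling

open Stirling

theorem stmt_19 (m : ℕ) (hm : 0 < m) :
    ∃ θ : ℝ, |θ| < 1 ∧
      (Nat.choose (2 * m) m : ℝ) =
        (4 ^ m / Real.sqrt (Real.pi * m)) *
          Real.exp (-1 / (8 * m) + θ / (180 * (m : ℝ) ^ 3)) := by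
  refine ⟨180 * m ^ 3 * (stirlingError (2 * m) - 2 * stirlingError m + 1 / (8 * m)), ?_, ?_⟩
  · rw [abs_mul, abs_of_pos (by positivity), ← lt_div_iff₀' (by positivity)]
    exact abs_stirlingError_two_mul_sub_add_lt hm.ne'
  · rw [choose_two_mul_self_eq hm.ne']
    congr 2
    field_simp
    ring
end
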